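/- arXiv:1307.7957 — 12 statements merged into one kernel-verified Lean document; each statement's English description precedes it below -/
import Mathlib

section
/- Let F_m(x) = Σ_{p} A_{m,p} x_p^2 + Σ_{p≠m} B_{m,p} x_m x_p + Σ_{p<q, p≠m, q≠m} C^m_{p,q} x_p x_q + Σ_p D_{m,p} x_p + E_m for m = 1,…,M, and suppose the system x_m' = F_m(x) is kinetic, i.e. A_{m,p} ≥ 0 for p ≠ m, C^m_{p,q} ≥ 0, D_{m,p} ≥ 0 for p ≠ m, and E_m ≥ 0. If V(x) = Σ_m a_m x_m^2 with all a_m > 0 is a first integral (Σ_m a_m x_m F_m(x) = 0 identically), then each F_m has the form F_m(x) = Σ_{p≠m} a_p K_{m,p} x_p^2 − Σ_{p≠m} a_p K_{p,m} x_m x_p for some nonnegative numbers K_{m,p}. -/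
/-!
`Σ_m a_m x_m F_m(x)` is a cubic polynomial in `x` which vanishes identically. Evaluating it at
vectors supported on one, two and three coordinates reads off its coefficients:
`a_m A_{mm} = a_m D_{mm} = a_m E_m = 0`, `a_m B_{mp} + a_p A_{pm} = 0`,
`a_m D_{mp} + a_p D_{pm} = 0` and `a_m C^m_{pq} + a_p C^p_{mq} + a_q C^q_{mp} = 0`.
For a kinetic system the last two are sums of nonnegative terms, so all `D_{mp}` and `C^m_{pq}`
vanish, and `K_{mp} = A_{mp} / a_p` has the required properties.
-/

open Finset

theorem coeffs_eq_zero_of_forall_mul_quadratic {α β γ : ℝ}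
    (h : ∀ t : ℝ, t * (α * t ^ 2 + β * t + γ) = 0) : α = 0 ∧ β = 0 ∧ γ = 0 := by
  have h₁ := h 1
  have h₂ := h (-1)
  have h₃ := h 2
  refine ⟨?_, ?_, ?_⟩ <;> linarith

theorem coeffs_eq_zero_of_forall_mul_mul_linear {α β γ : ℝ}
    (h : ∀ s t : ℝ, s * t * (α * s + β * t + γ) = 0) : α = 0 ∧ β = 0 ∧ γ = 0 := by
  have h₁ := h 1 1
  have h₂ := h 1 (-1)
  have h₃ := h 2 1
  refine ⟨?_, ?_, ?_⟩ <;> linarith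

variable {M : ℕ}

def quadraticField (A B : Fin M → Fin M → ℝ) (C : Fin M → Fin M → Fin M → ℝ)
    (D : Fin M → Fin M → ℝ) (E : Fin M → ℝ) (m : Fin M) (x : Fin M → ℝ) : ℝ :=
  (∑ p, A m p * (x p) ^ 2) +
    (∑ p ∈ univ.filter (fun p => p ≠ m), B m p * x m * x p) +
    (∑ p, ∑ q ∈ univ.filter (fun q => p < q ∧ p ≠ m ∧ q ≠ m), C m p q * x p * x q) +
    (∑ p, D m p * x p) + E m

/-- `V(x) = Σ_m a_m x_m²` is a first integral of `x' = F(x)` (the factor `2` of `∇V` dropped). -/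
def IsDiagonalFirstIntegral (a : Fin M → ℝ) (F : Fin M → (Fin M → ℝ) → ℝ) : Prop :=
  ∀ x, ∑ m, a m * x m * F m x = 0

variable {A B : Fin M → Fin M → ℝ} {C : Fin M → Fin M → Fin M → ℝ} {D : Fin M → Fin M → ℝ}
  {E : Fin M → ℝ} {a : Fin M → ℝ}

theorem quadraticField_eq_of_support {S : Finset (Fin M)} {x : Fin M → ℝ}
    (hx : ∀ i ∉ S, x i = 0) (m : Fin M) :
    quadraticField A B C D E m x =
      (∑ p ∈ S, A m p * (x p) ^ 2) + (∑ p ∈ S with p ≠ m, B m p * x m * x p) +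
      (∑ p ∈ S, ∑ q ∈ S with p < q ∧ p ≠ m ∧ q ≠ m, C m p q * x p * x q) +
      (∑ p ∈ S, D m p * x p) + E m := by
  have h (f : Fin M → ℝ) (hf : ∀ i ∉ S, f i = 0) : ∑ i, f i = ∑ i ∈ S, f i :=
    (sum_subset (subset_univ S) fun i _ hi => hf i hi).symm
  simp only [quadraticField, sum_filter]
  rw [h _ fun i hi => by simp [hx i hi], h _ fun i hi => by simp [hx i hi],
    h _ fun i hi => by simp [hx i hi], h _ fun i hi => by simp [hx i hi]]
  congr 3
  exact sum_congr rfl fun p _ => h _ fun i hi => by simp [hx i hi]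

theorem sum_mul_quadraticField_eq_of_support {S : Finset (Fin M)} {x : Fin M → ℝ}
    (hx : ∀ i ∉ S, x i = 0) :
    ∑ m, a m * x m * quadraticField A B C D E m x =
      ∑ m ∈ S, a m * x m * ((∑ p ∈ S, A m p * (x p) ^ 2) +
        (∑ p ∈ S with p ≠ m, B m p * x m * x p) +
        (∑ p ∈ S, ∑ q ∈ S with p < q ∧ p ≠ m ∧ q ≠ m, C m p q * x p * x q) +
        (∑ p ∈ S, D m p * x p) + E m) := by
  rw [← sum_subset (subset_univ S) fun i _ hi => by simp [hx i hi]]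
  exact sum_congr rfl fun m _ => by rw [quadraticField_eq_of_support hx]

theorem IsDiagonalFirstIntegral.diag_coeffs_eq_zero
    (hfi : IsDiagonalFirstIntegral a (quadraticField A B C D E))
    {m : Fin M} (ha : a m ≠ 0) : A m m = 0 ∧ D m m = 0 ∧ E m = 0 := by
  have h (t : ℝ) : t * (a m * A m m * t ^ 2 + a m * D m m * t + a m * E m) = 0 := by
    rw [← hfi (Pi.single m t),
      sum_mul_quadraticField_eq_of_support (S := {m}) fun i hi => by simp_all]
    simp only [sum_singleton, Pi.single_eq_same, ne_eq, filter_singleton, ite_not,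
      lt_self_iff_false, and_self, false_and, ↓reduceIte, sum_empty, add_zero]
    ring
  obtain ⟨hA, hD, hE⟩ := coeffs_eq_zero_of_forall_mul_quadratic h
  exact ⟨(mul_eq_zero_iff_left ha).mp hA, (mul_eq_zero_iff_left ha).mp hD,
    (mul_eq_zero_iff_left ha).mp hE⟩

theorem IsDiagonalFirstIntegral.pair_relation
    (hfi : IsDiagonalFirstIntegral a (quadraticField A B C D E))
    (hdiag : ∀ m, A m m = 0 ∧ D m m = 0 ∧ E m = 0) {m p : Fin M} (hmp : m ≠ p) :
    a m * B m p + a p * A p m = 0 ∧ a m * D m p + a p * D p m = 0 := by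
  have h (s t : ℝ) : s * t * ((a m * B m p + a p * A p m) * s + (a m * A m p + a p * B p m) * t +
      (a m * D m p + a p * D p m)) = 0 := by
    rw [← hfi (Pi.single m s + Pi.single p t),
      sum_mul_quadraticField_eq_of_support (S := {m, p}) fun i hi => by simp_all]
    simp only [Pi.add_apply, mem_singleton, hmp, not_false_eq_true, sum_insert, Pi.single_eq_same,
      ne_eq, Pi.single_eq_of_ne, add_zero, sum_singleton, hmp.symm, zero_add, filter_insert,
      filter_singleton, ite_not, lt_self_iff_false, and_self, false_and, ↓reduceIte,
      insert_empty_eq, hdiag, zero_mul, not_true_eq_false, and_true, and_false, sum_empty]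
    ring
  obtain ⟨h₁, -, h₂⟩ := coeffs_eq_zero_of_forall_mul_mul_linear h
  exact ⟨h₁, h₂⟩

theorem IsDiagonalFirstIntegral.triple_relation
    (hfi : IsDiagonalFirstIntegral a (quadraticField A B C D E))
    (hdiag : ∀ m, A m m = 0 ∧ D m m = 0 ∧ E m = 0)
    (hpair : ∀ m p, m ≠ p → a m * B m p + a p * A p m = 0 ∧ a m * D m p + a p * D p m = 0)
    {m p q : Fin M} (hmp : m < p) (hpq : p < q) :
    a m * C m p q + a p * C p m q + a q * C q m p = 0 := by
  have hmq := hmp.trans hpq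
  rw [← hfi (Pi.single m 1 + Pi.single p 1 + Pi.single q 1),
    sum_mul_quadraticField_eq_of_support (S := {m, p, q}) fun i hi => by simp_all]
  simp only [Pi.add_apply, mem_insert, hmp.ne, mem_singleton, hmq.ne, or_self, not_false_eq_true,
    sum_insert, Pi.single_eq_same, ne_eq, Pi.single_eq_of_ne, add_zero, one_pow, mul_one, hpq.ne,
    hmp.ne', zero_add, sum_singleton, hmq.ne', hpq.ne', filter_insert, filter_singleton, ite_not,
    lt_self_iff_false, and_self, false_and, ↓reduceIte, hmp, true_and, hmq, hmp.not_gt, hpq,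
    hmq.not_gt, hpq.not_gt, sum_empty, hdiag, not_true_eq_false, and_true, and_false,
    insert_empty_eq]
  -- the pair relations cancel every monomial of `Σ a_k x_k F_k` except `x_m x_p x_q`
  linear_combination -((hpair m p hmp.ne).1 + (hpair p m hmp.ne').1 + (hpair m q hmq.ne).1 +
    (hpair q m hmq.ne').1 + (hpair p q hpq.ne).1 + (hpair q p hpq.ne').1 +
    (hpair m p hmp.ne).2 + (hpair m q hmq.ne).2 + (hpair p q hpq.ne).2)

theorem eq_zero_of_pair_relation (hapos : ∀ m, 0 < a m) (hD : ∀ m p, p ≠ m → 0 ≤ D m p)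
    (hpair : ∀ m p, m ≠ p → a m * D m p + a p * D p m = 0) {m p : Fin M} (hmp : m ≠ p) :
    D m p = 0 := by
  have h₁ := mul_nonneg (hapos m).le (hD m p hmp.symm)
  have h₂ := mul_nonneg (hapos p).le (hD p m hmp)
  exact (mul_eq_zero_iff_left (hapos m).ne').mp (by linarith [hpair m p hmp])

theorem eq_zero_of_triple_relation (hapos : ∀ m, 0 < a m)
    (hC : ∀ m p q, p < q → p ≠ m → q ≠ m → 0 ≤ C m p q)
    (htriple : ∀ m p q, m < p → p < q → a m * C m p q + a p * C p m q + a q * C q m p = 0)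
    {m p q : Fin M} (hpq : p < q) (hpm : p ≠ m) (hqm : q ≠ m) : C m p q = 0 := by
  have key {m p q : Fin M} (hmp : m < p) (hpq : p < q) :
      C m p q = 0 ∧ C p m q = 0 ∧ C q m p = 0 := by
    have hmq := hmp.trans hpq
    have h₁ := mul_nonneg (hapos m).le (hC m p q hpq hmp.ne' hmq.ne')
    have h₂ := mul_nonneg (hapos p).le (hC p m q hmq hmp.ne hpq.ne')
    have h₃ := mul_nonneg (hapos q).le (hC q m p hmp hmq.ne hpq.ne)
    have h := htriple m p q hmp hpq
    exact ⟨(mul_eq_zero_iff_left (hapos m).ne').mp (by linarith),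
      (mul_eq_zero_iff_left (hapos p).ne').mp (by linarith),
      (mul_eq_zero_iff_left (hapos q).ne').mp (by linarith)⟩
  rcases lt_trichotomy m p with hmp | rfl | hmp
  · exact (key hmp hpq).1
  · exact absurd rfl hpm
  rcases lt_trichotomy m q with hmq | rfl | hmq
  · exact (key hmp hmq).2.1
  · exact absurd rfl hqm
  · exact (key hpq hmq).2.2

theorem quadraticField_eq_of_coeffs (ha : ∀ m, a m ≠ 0) (hA : ∀ m, A m m = 0)
    (hB : ∀ m p, m ≠ p → a m * B m p + a p * A p m = 0)
    (hC : ∀ m p q, p < q → p ≠ m → q ≠ m → C m p q = 0) (hD : ∀ m p, D m p = 0)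
    (hE : ∀ m, E m = 0) (m : Fin M) (x : Fin M → ℝ) :
    quadraticField A B C D E m x =
      (∑ p ∈ univ.filter (fun p => p ≠ m), a p * (A m p / a p) * x p ^ 2) -
      (∑ p ∈ univ.filter (fun p => p ≠ m), a p * (A p m / a m) * x m * x p) := by
  have hAsum : ∑ p, A m p * x p ^ 2 =
      ∑ p ∈ univ.filter (fun p => p ≠ m), a p * (A m p / a p) * x p ^ 2 := by
    rw [← sum_filter_of_ne (p := fun p => p ≠ m) fun p _ h hpm => h (by rw [hpm, hA, zero_mul])]
    exact sum_congr rfl fun p _ => by rw [mul_div_cancel₀ _ (ha p)]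
  have hBsum : ∑ p ∈ univ.filter (fun p => p ≠ m), B m p * x m * x p =
      -∑ p ∈ univ.filter (fun p => p ≠ m), a p * (A p m / a m) * x m * x p := by
    rw [← sum_neg_distrib]
    refine sum_congr rfl fun p hp => ?_
    field_simp [ha m]
    linear_combination x m * x p * hB m p (mem_filter.mp hp).2.symm
  have hCsum :
      ∑ p, ∑ q ∈ univ.filter (fun q => p < q ∧ p ≠ m ∧ q ≠ m), C m p q * x p * x q = 0 :=
    sum_eq_zero fun p _ => sum_eq_zero fun q hq => by
      obtain ⟨-, hpq, hpm, hqm⟩ := mem_filter.mp hq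
      rw [hC m p q hpq hpm hqm, zero_mul, zero_mul]
  simp only [quadraticField, hAsum, hBsum, hCsum, hD, hE, zero_mul, sum_const_zero]
  ring

open Finset in
theorem stmt_2_general (M : ℕ)
    (A B D : Fin M → Fin M → ℝ) (C : Fin M → Fin M → Fin M → ℝ)
    (E : Fin M → ℝ) (a : Fin M → ℝ)
    (F : Fin M → (Fin M → ℝ) → ℝ)
    (hF : ∀ m x, F m x =
      (∑ p, A m p * (x p) ^ 2) +
      (∑ p ∈ univ.filter (fun p => p ≠ m), B m p * x m * x p) +
      (∑ p, ∑ q ∈ univ.filter (fun q => p < q ∧ p ≠ m ∧ q ≠ m),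
        C m p q * x p * x q) +
      (∑ p, D m p * x p) + E m)
    -- the system is kinetic:
    (hA : ∀ m p, p ≠ m → 0 ≤ A m p)
    (hC : ∀ m p q, p < q → p ≠ m → q ≠ m → 0 ≤ C m p q)
    (hD : ∀ m p, p ≠ m → 0 ≤ D m p)
    (hapos : ∀ m, 0 < a m)
    -- V is a first integral:
    (hfi : ∀ x : Fin M → ℝ, ∑ m, a m * x m * F m x = 0) :
    ∃ K : Fin M → Fin M → ℝ, (∀ m p, 0 ≤ K m p) ∧
      ∀ m x, F m x =
        (∑ p ∈ univ.filter (fun p => p ≠ m), a p * K m p * (x p) ^ 2) -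
        (∑ p ∈ univ.filter (fun p => p ≠ m), a p * K p m * x m * x p) := by
  obtain rfl : F = quadraticField A B C D E := funext fun m => funext (hF m)
  have hfi : IsDiagonalFirstIntegral a (quadraticField A B C D E) := hfi
  have hdiag m := hfi.diag_coeffs_eq_zero (hapos m).ne'
  have hpair m p (hmp : m ≠ p) := hfi.pair_relation hdiag hmp
  have hD0 m p : D m p = 0 := by
    rcases eq_or_ne m p with rfl | hmp
    · exact (hdiag m).2.1
    · exact eq_zero_of_pair_relation hapos hD (fun m p h => (hpair m p h).2) hmp
  have hC0 m p q (hpq : p < q) (hpm : p ≠ m) (hqm : q ≠ m) : C m p q = 0 :=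
    eq_zero_of_triple_relation hapos hC (fun _ _ _ => hfi.triple_relation hdiag hpair) hpq hpm hqm
  refine ⟨fun m p => A m p / a p, fun m p => ?_,
    quadraticField_eq_of_coeffs (fun m => (hapos m).ne') (fun m => (hdiag m).1)
      (fun m p h => (hpair m p h).1) hC0 hD0 (fun m => (hdiag m).2.2)⟩
  dsimp only
  rcases eq_or_ne p m with rfl | hpm
  · rw [(hdiag p).1, zero_div]
  · exact div_nonneg (hA m p hpm) (hapos p).le

open Finset in
/-- If the kinetic quadratic system `x_m' = F_m(x)` has the diagonal quadratic
function `V(x) = Σ a_m x_m²` (all `a_m > 0`) as a first integral, then each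
`F_m` has the form `Σ_{p≠m} a_p K_{m,p} x_p² − Σ_{p≠m} a_p K_{p,m} x_m x_p`
with `K_{m,p} ≥ 0`. -/
theorem stmt_2 (M : ℕ)
    (A B D : Fin M → Fin M → ℝ) (C : Fin M → Fin M → Fin M → ℝ)
    (E : Fin M → ℝ) (a : Fin M → ℝ)
    (F : Fin M → (Fin M → ℝ) → ℝ)
    (hF : ∀ m x, F m x =
      (∑ p, A m p * (x p) ^ 2) +
      (∑ p ∈ univ.filter (fun p => p ≠ m), B m p * x m * x p) +
      (∑ p, ∑ q ∈ univ.filter (fun q => p < q ∧ p ≠ m ∧ q ≠ m),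
        C m p q * x p * x q) +
      (∑ p, D m p * x p) + E m)
    -- the system is kinetic:
    (hA : ∀ m p, p ≠ m → 0 ≤ A m p)
    (hC : ∀ m p q, p < q → p ≠ m → q ≠ m → 0 ≤ C m p q)
    (hD : ∀ m p, p ≠ m → 0 ≤ D m p)
    (hE : ∀ m, 0 ≤ E m)
    (hapos : ∀ m, 0 < a m)
    -- V is a first integral:
    (hfi : ∀ x : Fin M → ℝ, ∑ m, a m * x m * F m x = 0) :
    ∃ K : Fin M → Fin M → ℝ, (∀ m p, 0 ≤ K m p) ∧
      ∀ m x, F m x =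
        (∑ p ∈ univ.filter (fun p => p ≠ m), a p * K m p * (x p) ^ 2) -
        (∑ p ∈ univ.filter (fun p => p ≠ m), a p * K p m * x m * x p) :=
  stmt_2_general M A B D C E a F hF hA hC hD hapos hfi
end

section
/- Conversely, for any nonnegative numbers K_{m,p} (m ≠ p) and positive numbers a_m, the system x_m' = Σ_{p≠m} a_p K_{m,p} x_p^2 − Σ_{p≠m} a_p K_{p,m} x_m x_p is kinetic and has V(x) = Σ_m a_m x_m^2 as a first integral. -/
open Finset

section QuadraticField

variable {ι R : Type*} [Fintype ι] [DecidableEq ι]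

theorem sum_sum_ne_sub_swap_eq_zero [AddCommGroup R] (f : ι → ι → R) :
    ∑ m, ∑ p ∈ univ.filter (· ≠ m), (f m p - f p m) = 0 := by
  simp only [sum_sub_distrib, sub_eq_zero]
  exact sum_comm' (by simp [eq_comm])

/-- Each cross term `a_m a_p K_{m,p} x_m x_p²` enters the `m`-th summand with `+` and the
`p`-th summand with `-`, so the double sum cancels. -/
theorem sum_mul_quadraticField_eq_zero [CommRing R] (a : ι → R) (K : ι → ι → R)
    (x : ι → R) :
    ∑ m, a m * x m * ((∑ p ∈ univ.filter (· ≠ m), a p * K m p * x p ^ 2) -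
      ∑ p ∈ univ.filter (· ≠ m), a p * K p m * x m * x p) = 0 := by
  rw [← sum_sum_ne_sub_swap_eq_zero fun m p => a m * a p * K m p * x m * x p ^ 2]
  refine sum_congr rfl fun m _ => ?_
  rw [mul_sub, mul_sum, mul_sum, ← sum_sub_distrib]
  exact sum_congr rfl fun p _ => by ring

theorem quadraticField_nonneg_of_eq_zero [CommRing R] [LinearOrder R] [IsOrderedRing R]
    {a : ι → R} {K : ι → ι → R} {x : ι → R} {m : ι}
    (ha : ∀ p, 0 ≤ a p) (hK : ∀ p, p ≠ m → 0 ≤ K m p) (hxm : x m = 0) :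
    0 ≤ (∑ p ∈ univ.filter (· ≠ m), a p * K m p * x p ^ 2) -
      ∑ p ∈ univ.filter (· ≠ m), a p * K p m * x m * x p := by
  simp only [hxm, mul_zero, zero_mul, sum_const_zero, sub_zero]
  exact sum_nonneg fun p hp =>
    mul_nonneg (mul_nonneg (ha p) (hK p (mem_filter.mp hp).2)) (sq_nonneg _)

end QuadraticField

/-- Conversely: for nonnegative `K_{m,p}` (m ≠ p) and positive `a_m`, the system
`x_m' = Σ_{p≠m} a_p K_{m,p} x_p² − Σ_{p≠m} a_p K_{p,m} x_m x_p` is kinetic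
(has no negative cross-effect) and has `V(x) = Σ a_m x_m²` as a first integral. -/
theorem stmt_3 (M : ℕ) (K : Fin M → Fin M → ℝ) (a : Fin M → ℝ)
    (hK : ∀ m p, m ≠ p → 0 ≤ K m p) (ha : ∀ m, 0 < a m)
    (F : Fin M → (Fin M → ℝ) → ℝ)
    (hF : ∀ m x, F m x =
      (∑ p ∈ univ.filter (fun p => p ≠ m), a p * K m p * (x p) ^ 2) -
      (∑ p ∈ univ.filter (fun p => p ≠ m), a p * K p m * x m * x p)) :
    -- the system is kinetic (no negative cross-effect):
    (∀ m, ∀ x : Fin M → ℝ, (∀ p, 0 ≤ x p) → x m = 0 → 0 ≤ F m x) ∧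
    -- V is a first integral:
    (∀ x : Fin M → ℝ, ∑ m, 2 * a m * x m * F m x = 0) := by
  refine ⟨fun m x _ hxm => ?_, fun x => ?_⟩
  · rw [hF]
    exact quadraticField_nonneg_of_eq_zero (fun p => (ha p).le) (fun p hp => hK m p hp.symm) hxm
  · calc ∑ m, 2 * a m * x m * F m x
        = 2 * ∑ m, a m * x m * F m x := by simp only [mul_sum, mul_assoc]
      _ = 0 := by simp only [hF, sum_mul_quadraticField_eq_zero, mul_zero]
end

section
/- Let x_m' = F_m(x) be a quadratic polynomial system on ℝ^M that is kinetic and kinetically mass conserving, i.e., there exist positive numbers ϱ_1,…,ϱ_M with Σ_m ϱ_m F_m(x) = 0 identically. If V(x) = Σ_m a_m x_m^2 with all a_m ≠ 0 is a first integral, then F_m = 0 for all m. -/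
/-!
Evaluate both identities at sparse points. At `x = 0` mass conservation is a `ϱ`-weighted sum
of the nonnegative constants, so these vanish. On an axis `x = t e_p` the first integral reads
`a_p t F_p(t e_p) = 0`, which kills the `x_p²` and `x_p` coefficients of `F_p`; the remaining
coefficients of these monomials are nonnegative by kineticity, and mass conservation along the
axis forces them to vanish too. On the plane `x = s e_u + t e_v` only the monomial `x_u x_v`
survives: the first integral kills its coefficients in `F_u` and `F_v`, and mass conservation
then kills its (nonnegative) coefficients in all other `F_m`.
-/

open Finset

theorem eq_zero_of_sum_mul_eq_zero {ι R : Type*} [Fintype ι] [Semiring R] [PartialOrder R]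
    [IsOrderedRing R] [NoZeroDivisors R] {w f : ι → R} (hw : ∀ i, 0 < w i) (hf : ∀ i, 0 ≤ f i)
    (h : ∑ i, w i * f i = 0) (i : ι) : f i = 0 :=
  have hwf := (sum_eq_zero_iff_of_nonneg fun j _ => mul_nonneg (hw j).le (hf j)).1 h i (mem_univ i)
  (mul_eq_zero.1 hwf).resolve_left (hw i).ne'

theorem eq_zero_of_forall_mul_sq_add_mul_eq_zero {α β : ℝ} (h : ∀ t : ℝ, α * t ^ 2 + β * t = 0) :
    α = 0 ∧ β = 0 := by
  have h₁ := h 1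
  have h₂ := h (-1)
  constructor <;> linarith

variable {ι : Type*} [Fintype ι] [LinearOrder ι]

def quadraticSystem (A B D : ι → ι → ℝ) (C : ι → ι → ι → ℝ) (E : ι → ℝ) (m : ι) (x : ι → ℝ) :
    ℝ :=
  (∑ p, A m p * (x p) ^ 2) +
  (∑ p ∈ univ.filter (fun p => p ≠ m), B m p * x m * x p) +
  (∑ p, ∑ q ∈ univ.filter (fun q => p < q ∧ p ≠ m ∧ q ≠ m), C m p q * x p * x q) +
  (∑ p, D m p * x p) + E m

namespace quadraticSystem

variable {A B D : ι → ι → ℝ} {C : ι → ι → ι → ℝ} {E : ι → ℝ}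

theorem apply_zero (m : ι) : quadraticSystem A B D C E m 0 = E m := by
  simp [quadraticSystem]

theorem apply_single (m p : ι) (t : ℝ) :
    quadraticSystem A B D C E m (Pi.single p t) = A m p * t ^ 2 + D m p * t + E m := by
  simp +contextual [quadraticSystem, Pi.single_apply, eq_comm (a := m), ne_of_lt]

theorem apply_single_add_single {u v : ι} (huv : u < v) (m : ι) (s t : ℝ) :
    quadraticSystem A B D C E m (Pi.single u s + Pi.single v t) =
      A m u * s ^ 2 + A m v * t ^ 2 + D m u * s + D m v * t + E m +
        (if m = u then B u v * s * t else if m = v then B v u * s * t else C m u v * s * t) := by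
  have hvu := huv.ne'
  simp only [quadraticSystem, Pi.add_apply, Pi.single_apply, add_sq, mul_add, add_mul,
    sum_add_distrib]
  rcases eq_or_ne m u with rfl | hmu
  · simp +contextual [hvu, huv.ne, ne_of_lt]
    ring
  rcases eq_or_ne m v with rfl | hmv
  · simp +contextual [hmu, huv.ne, ne_of_lt]
    ring
  · simp +contextual [hvu, ne_of_lt, hmu, hmv, Ne.symm hmu, Ne.symm hmv]
    rw [Fintype.sum_eq_single v (by grind), Fintype.sum_eq_single u (by grind)]
    simp [huv, huv.not_gt, Ne.symm hmu]
    ring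

theorem eq_zero_of_offDiag_eq_zero (hB : ∀ m p, p ≠ m → B m p = 0)
    (hC : ∀ m p q, p < q → p ≠ m → q ≠ m → C m p q = 0) (m : ι) (x : ι → ℝ) :
    quadraticSystem 0 B 0 C 0 m x = 0 := by
  simp +contextual [quadraticSystem, sum_filter, hB, hC]

variable {ϱ a : ι → ℝ}

theorem const_eq_zero (hE : ∀ m, 0 ≤ E m) (hϱ : ∀ m, 0 < ϱ m)
    (hmc : ∀ x, ∑ m, ϱ m * quadraticSystem A B D C E m x = 0) : E = 0 := by
  funext m
  have h0 := hmc 0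
  simp only [apply_zero] at h0
  exact eq_zero_of_sum_mul_eq_zero hϱ hE h0 m

theorem diag_eq_zero (ha : ∀ m, a m ≠ 0)
    (hfi : ∀ x : ι → ℝ, ∑ m, a m * x m * quadraticSystem A B D C 0 m x = 0) (p : ι) :
    A p p = 0 ∧ D p p = 0 := by
  refine eq_zero_of_forall_mul_sq_add_mul_eq_zero fun t => ?_
  rcases eq_or_ne t 0 with rfl | ht
  · ring
  have h := hfi (Pi.single p t)
  simp only [Pi.single_apply, mul_ite, ite_mul, mul_zero, zero_mul, sum_ite_eq', mem_univ,
    if_true, apply_single, Pi.zero_apply, add_zero] at h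
  simpa [ha p, ht] using h

theorem sq_linear_eq_zero (hA : ∀ m p, p ≠ m → 0 ≤ A m p)
    (hD : ∀ m p, p ≠ m → 0 ≤ D m p) (hdiag : ∀ p, A p p = 0 ∧ D p p = 0) (hϱ : ∀ m, 0 < ϱ m)
    (hmc : ∀ x, ∑ m, ϱ m * quadraticSystem A B D C 0 m x = 0) : A = 0 ∧ D = 0 := by
  have hcoef : ∀ p, ∑ m, ϱ m * A m p = 0 ∧ ∑ m, ϱ m * D m p = 0 := fun p =>
    eq_zero_of_forall_mul_sq_add_mul_eq_zero fun t => by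
      rw [← hmc (Pi.single p t), sum_mul, sum_mul, ← sum_add_distrib]
      refine sum_congr rfl fun m _ => ?_
      rw [apply_single, Pi.zero_apply]
      ring
  have hA' : ∀ m p, 0 ≤ A m p := by
    intro m p
    rcases eq_or_ne p m with rfl | hpm
    exacts [(hdiag p).1.ge, hA m p hpm]
  have hD' : ∀ m p, 0 ≤ D m p := by
    intro m p
    rcases eq_or_ne p m with rfl | hpm
    exacts [(hdiag p).2.ge, hD m p hpm]
  exact ⟨funext₂ fun m p => eq_zero_of_sum_mul_eq_zero hϱ (hA' · p) (hcoef p).1 m,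
    funext₂ fun m p => eq_zero_of_sum_mul_eq_zero hϱ (hD' · p) (hcoef p).2 m⟩

theorem mixed_eq_zero (ha : ∀ m, a m ≠ 0)
    (hfi : ∀ x : ι → ℝ, ∑ m, a m * x m * quadraticSystem 0 B 0 C 0 m x = 0) {u v : ι}
    (huv : u < v) :
    B u v = 0 ∧ B v u = 0 := by
  have h : ∀ t, a v * B v u * t ^ 2 + a u * B u v * t = 0 := fun t => by
    have h := hfi (Pi.single u 1 + Pi.single v t)
    simp only [Pi.add_apply, Pi.single_apply, mul_add, add_mul, mul_ite, ite_mul, mul_zero,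
      zero_mul, sum_add_distrib, sum_ite_eq', mem_univ, if_true] at h
    rw [apply_single_add_single huv, apply_single_add_single huv] at h
    simp [huv.ne'] at h
    linear_combination h
  obtain ⟨hv, hu⟩ := eq_zero_of_forall_mul_sq_add_mul_eq_zero h
  exact ⟨(mul_eq_zero.1 hu).resolve_left (ha u), (mul_eq_zero.1 hv).resolve_left (ha v)⟩

theorem cross_eq_zero (hC : ∀ m p q, p < q → p ≠ m → q ≠ m → 0 ≤ C m p q)
    (hϱ : ∀ m, 0 < ϱ m) (hmc : ∀ x, ∑ m, ϱ m * quadraticSystem 0 B 0 C 0 m x = 0)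
    (hB : ∀ m p, p ≠ m → B m p = 0) {m p q : ι} (hpq : p < q) (hpm : p ≠ m) (hqm : q ≠ m) :
    C m p q = 0 := by
  let f : ι → ℝ := fun r => if r = p then 0 else if r = q then 0 else C r p q
  have hf : ∀ r, 0 ≤ f r := fun r => by
    dsimp only [f]
    split_ifs with hrp hrq
    exacts [le_rfl, le_rfl, hC r p q hpq (Ne.symm hrp) (Ne.symm hrq)]
  have hsum : ∑ r, ϱ r * f r = 0 := by
    rw [← hmc (Pi.single p 1 + Pi.single q 1)]
    refine sum_congr rfl fun r _ => ?_
    rw [apply_single_add_single hpq]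
    split_ifs <;> simp_all [f, hB _ _ hpq.ne, hB _ _ hpq.ne']
  simpa [f, hpm.symm, hqm.symm] using eq_zero_of_sum_mul_eq_zero hϱ hf hsum m

end quadraticSystem

open quadraticSystem

open Finset in
/-- A kinetic, kinetically mass conserving quadratic system admitting the
diagonal quadratic first integral `V(x) = Σ a_m x_m²` (all `a_m ≠ 0`)
must be identically zero. -/
theorem stmt_4 (M : ℕ)
    (A B D : Fin M → Fin M → ℝ) (C : Fin M → Fin M → Fin M → ℝ)
    (E : Fin M → ℝ) (a : Fin M → ℝ) (ϱ : Fin M → ℝ)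
    (F : Fin M → (Fin M → ℝ) → ℝ)
    (hF : ∀ m x, F m x =
      (∑ p, A m p * (x p) ^ 2) +
      (∑ p ∈ univ.filter (fun p => p ≠ m), B m p * x m * x p) +
      (∑ p, ∑ q ∈ univ.filter (fun q => p < q ∧ p ≠ m ∧ q ≠ m),
        C m p q * x p * x q) +
      (∑ p, D m p * x p) + E m)
    -- the system is kinetic:
    (hA : ∀ m p, p ≠ m → 0 ≤ A m p)
    (hC : ∀ m p q, p < q → p ≠ m → q ≠ m → 0 ≤ C m p q)
    (hD : ∀ m p, p ≠ m → 0 ≤ D m p)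
    (hE : ∀ m, 0 ≤ E m)
    -- the system is kinetically mass conserving:
    (hϱ : ∀ m, 0 < ϱ m)
    (hmc : ∀ x : Fin M → ℝ, ∑ m, ϱ m * F m x = 0)
    (ha : ∀ m, a m ≠ 0)
    -- V is a first integral:
    (hfi : ∀ x : Fin M → ℝ, ∑ m, a m * x m * F m x = 0) :
    ∀ m x, F m x = 0 := by
  obtain rfl : F = quadraticSystem A B D C E := funext₂ hF
  obtain rfl : E = 0 := const_eq_zero hE hϱ hmc
  obtain ⟨rfl, rfl⟩ : A = 0 ∧ D = 0 :=
    sq_linear_eq_zero hA hD (diag_eq_zero ha hfi) hϱ hmc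
  have hB : ∀ m p, p ≠ m → B m p = 0 := fun m p hpm => by
    rcases hpm.lt_or_gt with hpm | hmp
    exacts [(mixed_eq_zero ha hfi hpm).2, (mixed_eq_zero ha hfi hmp).1]
  exact eq_zero_of_offDiag_eq_zero hB fun m p q hpq hpm hqm =>
    cross_eq_zero hC hϱ hmc hB hpq hpm hqm
end

section
/- Consider the quadratic system x' = A_1 x^2 + B_1 x y + C_1 y^2 + D_1 x + E_1 y + F_1, y' = A_2 x^2 + B_2 x y + C_2 y^2 + D_2 x + E_2 y + F_2, which is kinetic (C_1, E_1, F_1, A_2, D_2, F_2 ≥ 0). If V(x,y) = a x^2 + 2b x y + c y^2 with a > 0, c > 0, ac − b^2 ≠ 0 is a first integral, then there exist K, L ≥ 0 such that x' = −bK x^2 + (−cK + bL) x y + cL y^2 and y' = aK x^2 + (bK − aL) x y − bL y^2. -/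
/-!
Write `u = a x + b y`, `v = b x + c y`, so that the first-integral identity reads
`u p + v q = 0` for the right-hand side `(p, q)`. Each homogeneous component of the field
satisfies this identity separately. Since `ac - b² ≠ 0`, the linear forms `u, v` are
independent, which forces the component of degree `n` to be `ℓ · (-v, u)` with `ℓ` a form
of degree `n - 1`: the constant part vanishes, the linear part is a multiple `k (-v, u)`,
and the quadratic part is `(K x - L y) (-v, u)`. For the linear part, kinetics makes the
coefficients `-c k` of `y` in `x'` and `a k` of `x` in `y'` both nonnegative, so `k = 0`;
for the quadratic part it gives `K = A₂ / a ≥ 0` and `L = C₁ / c ≥ 0`.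
-/

section Field

variable {𝕜 : Type*} [Field 𝕜] {a b c : 𝕜}

theorem const_field_eq_zero_of_firstIntegral {F₁ F₂ : 𝕜} (hdisc : a * c - b ^ 2 ≠ 0)
    (h : ∀ x y, (a * x + b * y) * F₁ + (b * x + c * y) * F₂ = 0) :
    F₁ = 0 ∧ F₂ = 0 := by
  have hx := h 1 0
  have hy := h 0 1
  constructor
  · refine (mul_eq_zero.1 ?_).resolve_left hdisc
    linear_combination c * hx - b * hy
  · refine (mul_eq_zero.1 ?_).resolve_left hdisc
    linear_combination a * hy - b * hx

variable [CharZero 𝕜]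

theorem cubic_coeffs_eq_zero {p₀ p₁ p₂ p₃ : 𝕜}
    (h : ∀ t, p₀ + p₁ * t + p₂ * t ^ 2 + p₃ * t ^ 3 = 0) :
    p₀ = 0 ∧ p₁ = 0 ∧ p₂ = 0 ∧ p₃ = 0 := by
  have h₀ := h 0
  have h₁ := h 1
  have h₂ := h (-1)
  have h₃ := h 2
  refine ⟨by linear_combination h₀, ?_, ?_, ?_⟩
  · linear_combination (-1/2 : 𝕜) * h₀ + h₁ - (1/3 : 𝕜) * h₂ - (1/6 : 𝕜) * h₃
  · linear_combination -h₀ + (1/2 : 𝕜) * h₁ + (1/2 : 𝕜) * h₂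
  · linear_combination (1/2 : 𝕜) * h₀ - (1/2 : 𝕜) * h₁ - (1/6 : 𝕜) * h₂ + (1/6 : 𝕜) * h₃

theorem binary_cubic_coeffs_eq_zero {p₀ p₁ p₂ p₃ : 𝕜}
    (h : ∀ x y, p₀ * x ^ 3 + p₁ * x ^ 2 * y + p₂ * x * y ^ 2 + p₃ * y ^ 3 = 0) :
    p₀ = 0 ∧ p₁ = 0 ∧ p₂ = 0 ∧ p₃ = 0 :=
  cubic_coeffs_eq_zero fun t => by simpa using h 1 t

theorem homogeneous_components_eq_zero {f₁ f₂ f₃ : 𝕜 → 𝕜 → 𝕜}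
    (hf₁ : ∀ s x y, f₁ (s * x) (s * y) = s * f₁ x y)
    (hf₂ : ∀ s x y, f₂ (s * x) (s * y) = s ^ 2 * f₂ x y)
    (hf₃ : ∀ s x y, f₃ (s * x) (s * y) = s ^ 3 * f₃ x y)
    (h : ∀ x y, f₁ x y + f₂ x y + f₃ x y = 0) :
    (∀ x y, f₁ x y = 0) ∧ (∀ x y, f₂ x y = 0) ∧ ∀ x y, f₃ x y = 0 := by
  have h_cubic (x y s : 𝕜) : 0 + f₁ x y * s + f₂ x y * s ^ 2 + f₃ x y * s ^ 3 = 0 := by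
    linear_combination h (s * x) (s * y) - hf₁ s x y - hf₂ s x y - hf₃ s x y
  exact ⟨fun x y => (cubic_coeffs_eq_zero (h_cubic x y)).2.1,
    fun x y => (cubic_coeffs_eq_zero (h_cubic x y)).2.2.1,
    fun x y => (cubic_coeffs_eq_zero (h_cubic x y)).2.2.2⟩

theorem linear_field_of_firstIntegral {D₁ E₁ D₂ E₂ : 𝕜} (ha : a ≠ 0)
    (hdisc : a * c - b ^ 2 ≠ 0)
    (h : ∀ x y, (a * x + b * y) * (D₁ * x + E₁ * y) + (b * x + c * y) * (D₂ * x + E₂ * y) = 0) :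
    ∃ k, D₁ = -b * k ∧ E₁ = -c * k ∧ D₂ = a * k ∧ E₂ = b * k := by
  have h_cubic (t : 𝕜) : (a * D₁ + b * D₂) + (a * E₁ + b * D₁ + b * E₂ + c * D₂) * t +
      (b * E₁ + c * E₂) * t ^ 2 + 0 * t ^ 3 = 0 := by
    linear_combination h 1 t
  obtain ⟨hxx, hxy, hyy, -⟩ := cubic_coeffs_eq_zero h_cubic
  refine ⟨D₂ / a, ?_, ?_, by field_simp, ?_⟩
  · field_simp
    linear_combination hxx
  · have : (a * c - b ^ 2) * (a * E₁ + c * D₂) = 0 := by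
      linear_combination (a * c) * hxy - (a * b) * hyy - (b * c) * hxx
    field_simp
    linear_combination (mul_eq_zero.1 this).resolve_left hdisc
  · have : (a * c - b ^ 2) * (a * E₂ - b * D₂) = 0 := by
      linear_combination -(a * b) * hxy + b ^ 2 * hxx + a ^ 2 * hyy
    field_simp
    linear_combination (mul_eq_zero.1 this).resolve_left hdisc

theorem quadratic_field_of_firstIntegral {A₁ B₁ C₁ A₂ B₂ C₂ : 𝕜} (ha : a ≠ 0) (hc : c ≠ 0)
    (hdisc : a * c - b ^ 2 ≠ 0)
    (h : ∀ x y, (a * x + b * y) * (A₁ * x ^ 2 + B₁ * x * y + C₁ * y ^ 2) +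
      (b * x + c * y) * (A₂ * x ^ 2 + B₂ * x * y + C₂ * y ^ 2) = 0) :
    ∃ K L, A₁ = -b * K ∧ B₁ = -(c * K) + b * L ∧ C₁ = c * L ∧
      A₂ = a * K ∧ B₂ = b * K - a * L ∧ C₂ = -b * L := by
  have h_cubic (x y : 𝕜) : (a * A₁ + b * A₂) * x ^ 3 +
      (a * B₁ + b * A₁ + b * B₂ + c * A₂) * x ^ 2 * y +
      (a * C₁ + b * B₁ + b * C₂ + c * B₂) * x * y ^ 2 + (b * C₁ + c * C₂) * y ^ 3 = 0 := by
    linear_combination h x y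
  obtain ⟨hxxx, hxxy, hxyy, hyyy⟩ := binary_cubic_coeffs_eq_zero h_cubic
  refine ⟨A₂ / a, C₁ / c, ?_, ?_, by field_simp, by field_simp, ?_, ?_⟩
  · field_simp
    linear_combination hxxx
  · have : (a * c - b ^ 2) * (a * c * B₁ + c ^ 2 * A₂ - a * b * C₁) = 0 := by
      linear_combination (a * c) * (c * hxxy - b * hxyy) - b * c ^ 2 * hxxx + a * b ^ 2 * hyyy
    field_simp
    linear_combination (mul_eq_zero.1 this).resolve_left hdisc
  · have : (a * c - b ^ 2) * (a * c * B₂ - b * c * A₂ + a ^ 2 * C₁) = 0 := by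
      linear_combination (a * c) * (a * hxyy - b * hxxy) - a ^ 2 * b * hyyy + b ^ 2 * c * hxxx
    field_simp
    linear_combination (mul_eq_zero.1 this).resolve_left hdisc
  · field_simp
    linear_combination hyyy

end Field

theorem linear_field_eq_zero_of_kinetic_of_firstIntegral {𝕜 : Type*} [Field 𝕜] [LinearOrder 𝕜]
    [IsStrictOrderedRing 𝕜] {a b c D₁ E₁ D₂ E₂ : 𝕜} (ha : 0 < a) (hc : 0 < c)
    (hdisc : a * c - b ^ 2 ≠ 0) (hE₁ : 0 ≤ E₁) (hD₂ : 0 ≤ D₂)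
    (h : ∀ x y, (a * x + b * y) * (D₁ * x + E₁ * y) + (b * x + c * y) * (D₂ * x + E₂ * y) = 0) :
    D₁ = 0 ∧ E₁ = 0 ∧ D₂ = 0 ∧ E₂ = 0 := by
  obtain ⟨k, rfl, rfl, rfl, rfl⟩ := linear_field_of_firstIntegral ha.ne' hdisc h
  have hk_nonpos : k ≤ 0 := nonpos_of_mul_nonpos_right (by linarith) hc
  have hk_nonneg : 0 ≤ k := nonneg_of_mul_nonneg_right hD₂ ha
  obtain rfl : k = 0 := le_antisymm hk_nonpos hk_nonneg
  simp

theorem stmt_5_general (A₁ B₁ C₁ D₁ E₁ F₁ A₂ B₂ C₂ D₂ E₂ F₂ a b c : ℝ)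
    -- kinetic:
    (hC₁ : 0 ≤ C₁) (hE₁ : 0 ≤ E₁)
    (hA₂ : 0 ≤ A₂) (hD₂ : 0 ≤ D₂)
    (ha : 0 < a) (hc : 0 < c) (hdisc : a * c - b ^ 2 ≠ 0)
    -- V is a first integral:
    (hfi : ∀ x y : ℝ,
      (2 * a * x + 2 * b * y) *
        (A₁ * x ^ 2 + B₁ * x * y + C₁ * y ^ 2 + D₁ * x + E₁ * y + F₁) +
      (2 * b * x + 2 * c * y) *
        (A₂ * x ^ 2 + B₂ * x * y + C₂ * y ^ 2 + D₂ * x + E₂ * y + F₂) = 0) :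
    ∃ K L : ℝ, 0 ≤ K ∧ 0 ≤ L ∧
      (∀ x y : ℝ,
        A₁ * x ^ 2 + B₁ * x * y + C₁ * y ^ 2 + D₁ * x + E₁ * y + F₁ =
          -b * K * x ^ 2 + (-(c * K) + b * L) * x * y + c * L * y ^ 2) ∧
      (∀ x y : ℝ,
        A₂ * x ^ 2 + B₂ * x * y + C₂ * y ^ 2 + D₂ * x + E₂ * y + F₂ =
          a * K * x ^ 2 + (b * K - a * L) * x * y - b * L * y ^ 2) := by
  obtain ⟨h_const, h_linear, h_quadratic⟩ := homogeneous_components_eq_zero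
    (f₁ := fun x y => (a * x + b * y) * F₁ + (b * x + c * y) * F₂)
    (f₂ := fun x y => (a * x + b * y) * (D₁ * x + E₁ * y) + (b * x + c * y) * (D₂ * x + E₂ * y))
    (f₃ := fun x y => (a * x + b * y) * (A₁ * x ^ 2 + B₁ * x * y + C₁ * y ^ 2) +
      (b * x + c * y) * (A₂ * x ^ 2 + B₂ * x * y + C₂ * y ^ 2))
    (by intros; ring) (by intros; ring) (by intros; ring)
    (fun x y => by linear_combination hfi x y / 2)
  obtain ⟨rfl, rfl⟩ := const_field_eq_zero_of_firstIntegral hdisc h_const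
  obtain ⟨rfl, rfl, rfl, rfl⟩ :=
    linear_field_eq_zero_of_kinetic_of_firstIntegral ha hc hdisc hE₁ hD₂ h_linear
  obtain ⟨K, L, rfl, rfl, rfl, rfl, rfl, rfl⟩ :=
    quadratic_field_of_firstIntegral ha.ne' hc.ne' hdisc h_quadratic
  refine ⟨K, L, nonneg_of_mul_nonneg_right hA₂ ha, nonneg_of_mul_nonneg_right hC₁ hc,
    fun x y => by ring, fun x y => by ring⟩

/-- Theorem on `V = a x² + 2b xy + c y²` with `a, c > 0`, `ac − b² ≠ 0` as a
first integral of a kinetic planar quadratic system. -/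
theorem stmt_5 (A₁ B₁ C₁ D₁ E₁ F₁ A₂ B₂ C₂ D₂ E₂ F₂ a b c : ℝ)
    -- kinetic:
    (hC₁ : 0 ≤ C₁) (hE₁ : 0 ≤ E₁) (hF₁ : 0 ≤ F₁)
    (hA₂ : 0 ≤ A₂) (hD₂ : 0 ≤ D₂) (hF₂ : 0 ≤ F₂)
    (ha : 0 < a) (hc : 0 < c) (hdisc : a * c - b ^ 2 ≠ 0)
    -- V is a first integral:
    (hfi : ∀ x y : ℝ,
      (2 * a * x + 2 * b * y) *
        (A₁ * x ^ 2 + B₁ * x * y + C₁ * y ^ 2 + D₁ * x + E₁ * y + F₁) +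
      (2 * b * x + 2 * c * y) *
        (A₂ * x ^ 2 + B₂ * x * y + C₂ * y ^ 2 + D₂ * x + E₂ * y + F₂) = 0) :
    ∃ K L : ℝ, 0 ≤ K ∧ 0 ≤ L ∧
      (∀ x y : ℝ,
        A₁ * x ^ 2 + B₁ * x * y + C₁ * y ^ 2 + D₁ * x + E₁ * y + F₁ =
          -b * K * x ^ 2 + (-(c * K) + b * L) * x * y + c * L * y ^ 2) ∧
      (∀ x y : ℝ,
        A₂ * x ^ 2 + B₂ * x * y + C₂ * y ^ 2 + D₂ * x + E₂ * y + F₂ =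
          a * K * x ^ 2 + (b * K - a * L) * x * y - b * L * y ^ 2) :=
  stmt_5_general A₁ B₁ C₁ D₁ E₁ F₁ A₂ B₂ C₂ D₂ E₂ F₂ a b c hC₁ hE₁ hA₂ hD₂ ha hc hdisc hfi
end

section
/- Suppose the kinetic quadratic planar system x' = −bK x^2 + (−cK + bL) xy + cL y^2, y' = aK x^2 + (bK − aL)xy − bL y^2, with a, c > 0, ac − b^2 ≠ 0, K, L ≥ 0, is kinetically mass conserving: there exist ϱ_1, ϱ_2 > 0 with ϱ_1 x' + ϱ_2 y' = 0 identically. Then K = L = 0, i.e., x' = y' = 0. -/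
/-!
The conserved combination factors as `(K x - L y) * ((a ϱ₂ - b ϱ₁) x + (b ϱ₂ - c ϱ₁) y)`.
A product of two linear forms vanishes identically only if one factor does, and the second
factor cannot vanish: that would give `(a c - b ^ 2) ϱ₁ = 0`.
-/

theorem eq_zero_or_eq_zero_of_forall_linear_mul_eq_zero {R : Type*} [CommRing R]
    [NoZeroDivisors R] {α β γ δ : R} (h : ∀ x y : R, (α * x + β * y) * (γ * x + δ * y) = 0) :
    (α = 0 ∧ β = 0) ∨ (γ = 0 ∧ δ = 0) := by
  have hαγ : α * γ = 0 := by simpa using h 1 0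
  have hβδ : β * δ = 0 := by simpa using h 0 1
  have hcross : α * δ + β * γ = 0 := by linear_combination h 1 1 - hαγ - hβδ
  rcases mul_eq_zero.mp hαγ with rfl | rfl
  · by_cases hβ : β = 0
    · exact .inl ⟨rfl, hβ⟩
    · exact .inr ⟨by simpa [hβ] using hcross, by simpa [hβ] using hβδ⟩
  · by_cases hδ : δ = 0
    · exact .inr ⟨rfl, hδ⟩
    · exact .inl ⟨by simpa [hδ] using hcross, by simpa [hδ] using hβδ⟩

theorem stmt_6_general (a b c K L ϱ₁ ϱ₂ : ℝ)
    (hdisc : a * c - b ^ 2 ≠ 0)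
    (hϱ₁ : 0 < ϱ₁)
    (hmc : ∀ x y : ℝ,
      ϱ₁ * (-b * K * x ^ 2 + (-(c * K) + b * L) * x * y + c * L * y ^ 2) +
      ϱ₂ * (a * K * x ^ 2 + (b * K - a * L) * x * y - b * L * y ^ 2) = 0) :
    K = 0 ∧ L = 0 := by
  have hfactor : ∀ x y : ℝ,
      (K * x + -L * y) * ((a * ϱ₂ - b * ϱ₁) * x + (b * ϱ₂ - c * ϱ₁) * y) = 0 := fun x y => by
    rw [← hmc x y]; ring
  rcases eq_zero_or_eq_zero_of_forall_linear_mul_eq_zero hfactor with ⟨hK, hL⟩ | ⟨hp, hq⟩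
  · exact ⟨hK, neg_eq_zero.mp hL⟩
  · have hdisc_mul : (a * c - b ^ 2) * ϱ₁ = 0 := by linear_combination b * hp - a * hq
    exact absurd hdisc_mul (mul_ne_zero hdisc hϱ₁.ne')

/-- If the kinetic quadratic system of Theorem `eq2D-1` is kinetically mass
conserving, then `K = L = 0`, i.e. `x' = y' = 0`. -/
theorem stmt_6 (a b c K L ϱ₁ ϱ₂ : ℝ)
    (ha : 0 < a) (hc : 0 < c) (hdisc : a * c - b ^ 2 ≠ 0)
    (hK : 0 ≤ K) (hL : 0 ≤ L) (hϱ₁ : 0 < ϱ₁) (hϱ₂ : 0 < ϱ₂)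
    (hmc : ∀ x y : ℝ,
      ϱ₁ * (-b * K * x ^ 2 + (-(c * K) + b * L) * x * y + c * L * y ^ 2) +
      ϱ₂ * (a * K * x ^ 2 + (b * K - a * L) * x * y - b * L * y ^ 2) = 0) :
    K = 0 ∧ L = 0 :=
  stmt_6_general a b c K L ϱ₁ ϱ₂ hdisc hϱ₁ hmc
end

section
/- Consider a kinetic planar quadratic system x' = A_1x^2+B_1xy+C_1y^2+D_1x+E_1y+F_1, y' = A_2x^2+B_2xy+C_2y^2+D_2x+E_2y+F_2 (with C_1,E_1,F_1,A_2,D_2,F_2 ≥ 0). If V(x,y) = a x^2 + 2b xy + c y^2 with a,b,c > 0 and ac = b^2 is a first integral, then there exist K,L,M,N ≥ 0 and S ∈ ℝ with x' = −bK x^2 + cS xy + cL y^2 − bM x + cN y and y' = aK x^2 − bS xy − bL y^2 + aM x − bN y. -/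
/-!
Since `ac = b²`, the gradient of `V` is `2 (ax + by) · (1, b/a)`, so `V` being a first integral
says that `(ax + by) (a x' + b y')` vanishes identically. The quadratic `a x' + b y'` then vanishes
off a line, hence everywhere by continuity, so `a x' + b y' ≡ 0` coefficientwise. Kineticity makes
the signs of `A₂, D₂, C₁, E₁` the signs of `K, M, L, N`, and forces both constant terms to vanish.
-/

lemma eq_zero_of_continuous_of_linear_mul_eq_zero {g : ℝ → ℝ} (hg : Continuous g) {a c : ℝ}
    (ha : a ≠ 0) (h : ∀ x, (a * x + c) * g x = 0) (x : ℝ) : g x = 0 := by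
  refine congrFun (Continuous.ext_on (dense_compl_singleton (-c / a)) hg continuous_const
    fun x hx => ?_) x
  have hlin : a * x + c ≠ 0 := by
    intro hzero
    exact hx (Set.mem_singleton_iff.mpr (by field_simp; linear_combination hzero))
  exact (mul_eq_zero_iff_left hlin).mp (h x)

lemma mul_add_mul_eq_zero_of_first_integral {P Q : ℝ → ℝ → ℝ}
    (hP : ∀ y, Continuous (P · y)) (hQ : ∀ y, Continuous (Q · y)) {a b c : ℝ} (ha : a ≠ 0)
    (hdet : a * c = b ^ 2)
    (hfi : ∀ x y, (2 * a * x + 2 * b * y) * P x y + (2 * b * x + 2 * c * y) * Q x y = 0)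
    (x y : ℝ) : a * P x y + b * Q x y = 0 :=
  eq_zero_of_continuous_of_linear_mul_eq_zero (g := fun x => a * P x y + b * Q x y) (c := b * y)
    (by fun_prop) ha (fun x => by linear_combination a / 2 * hfi x y - y * Q x y * hdet) x

lemma quadratic_coeffs_eq_zero {K : Type*} [Field K] [NeZero (2 : K)] {α β γ δ ε φ : K}
    (h : ∀ x y, α * x ^ 2 + β * x * y + γ * y ^ 2 + δ * x + ε * y + φ = 0) :
    α = 0 ∧ β = 0 ∧ γ = 0 ∧ δ = 0 ∧ ε = 0 ∧ φ = 0 := by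
  have h2 : (2 : K) ≠ 0 := two_ne_zero
  have hφ : φ = 0 := by linear_combination h 0 0
  have hα : 2 * α = 0 := by linear_combination h 1 0 + h (-1) 0 - 2 * h 0 0
  have hδ : 2 * δ = 0 := by linear_combination h 1 0 - h (-1) 0
  have hγ : 2 * γ = 0 := by linear_combination h 0 1 + h 0 (-1) - 2 * h 0 0
  have hε : 2 * ε = 0 := by linear_combination h 0 1 - h 0 (-1)
  have hβ : β = 0 := by linear_combination h 1 1 - h 1 0 - h 0 1 + h 0 0
  simp only [mul_eq_zero_iff_left h2] at hα hγ hδ hε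
  exact ⟨hα, hβ, hγ, hδ, hε, hφ⟩

lemma mul_add_mul_eq_zero_of_det_eq_zero {K : Type*} [Field K] {a b c X Y : K} (ha : a ≠ 0)
    (hdet : a * c = b ^ 2) (h : a * X + b * Y = 0) : b * X + c * Y = 0 :=
  (mul_eq_zero_iff_left ha).mp (by linear_combination b * h + Y * hdet)

/-- `V = a x² + 2b xy + c y²` with `a, b, c > 0`, `ac = b²`, as a first
integral of a kinetic planar quadratic system. -/
theorem stmt_7 (A₁ B₁ C₁ D₁ E₁ F₁ A₂ B₂ C₂ D₂ E₂ F₂ a b c : ℝ)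
    (hC₁ : 0 ≤ C₁) (hE₁ : 0 ≤ E₁) (hF₁ : 0 ≤ F₁)
    (hA₂ : 0 ≤ A₂) (hD₂ : 0 ≤ D₂) (hF₂ : 0 ≤ F₂)
    (ha : 0 < a) (hb : 0 < b) (hc : 0 < c) (hdisc : a * c = b ^ 2)
    (hfi : ∀ x y : ℝ,
      (2 * a * x + 2 * b * y) *
        (A₁ * x ^ 2 + B₁ * x * y + C₁ * y ^ 2 + D₁ * x + E₁ * y + F₁) +
      (2 * b * x + 2 * c * y) *
        (A₂ * x ^ 2 + B₂ * x * y + C₂ * y ^ 2 + D₂ * x + E₂ * y + F₂) = 0) :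
    ∃ K L M N S : ℝ, 0 ≤ K ∧ 0 ≤ L ∧ 0 ≤ M ∧ 0 ≤ N ∧
      (∀ x y : ℝ,
        A₁ * x ^ 2 + B₁ * x * y + C₁ * y ^ 2 + D₁ * x + E₁ * y + F₁ =
          -b * K * x ^ 2 + c * S * x * y + c * L * y ^ 2 - b * M * x + c * N * y) ∧
      (∀ x y : ℝ,
        A₂ * x ^ 2 + B₂ * x * y + C₂ * y ^ 2 + D₂ * x + E₂ * y + F₂ =
          a * K * x ^ 2 - b * S * x * y - b * L * y ^ 2 + a * M * x - b * N * y) := by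
  have hcomb := mul_add_mul_eq_zero_of_first_integral
    (P := fun x y => A₁ * x ^ 2 + B₁ * x * y + C₁ * y ^ 2 + D₁ * x + E₁ * y + F₁)
    (Q := fun x y => A₂ * x ^ 2 + B₂ * x * y + C₂ * y ^ 2 + D₂ * x + E₂ * y + F₂)
    (fun y => by fun_prop) (fun y => by fun_prop) ha.ne' hdisc hfi
  obtain ⟨hA, hB, hC, hD, hE, hF⟩ := quadratic_coeffs_eq_zero (α := a * A₁ + b * A₂)
    (β := a * B₁ + b * B₂) (γ := a * C₁ + b * C₂) (δ := a * D₁ + b * D₂) (ε := a * E₁ + b * E₂)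
    (φ := a * F₁ + b * F₂) fun x y => by linear_combination hcomb x y
  obtain ⟨haF₁, hbF₂⟩ :=
    (add_eq_zero_iff_of_nonneg (mul_nonneg ha.le hF₁) (mul_nonneg hb.le hF₂)).mp hF
  have hF₁0 : F₁ = 0 := (mul_eq_zero_iff_left ha.ne').mp haF₁
  have hF₂0 : F₂ = 0 := (mul_eq_zero_iff_left hb.ne').mp hbF₂
  have hB' := mul_add_mul_eq_zero_of_det_eq_zero ha.ne' hdisc hB
  have hC' := mul_add_mul_eq_zero_of_det_eq_zero ha.ne' hdisc hC
  have hE' := mul_add_mul_eq_zero_of_det_eq_zero ha.ne' hdisc hE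
  refine ⟨A₂ / a, C₁ / c, D₂ / a, E₁ / c, B₁ / c, by positivity, by positivity, by positivity,
    by positivity, fun x y => ?_, fun x y => ?_⟩
  · field_simp
    linear_combination x ^ 2 * hA + x * hD + a * hF₁0
  · field_simp
    linear_combination x * y * hB' + y ^ 2 * hC' + y * hE' + c * hF₂0
end

section
/- Consider a kinetic planar quadratic system as above. If V(x,y) = a x^2 − 2b xy + c y^2 with a,b,c > 0 and ac = b^2 is a first integral, then there exist K,L,M,N,R ≥ 0 and S ∈ ℝ with x' = bK x^2 + cS xy + cL y^2 + bM x + cN y + cR and y' = aK x^2 + bS xy + bL y^2 + aM x + bN y + bR. -/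
/-!
Since `ac = b²`, the gradient of `V` is proportional to the linear form `ℓ = ax − by`:
`b (−2bx + 2cy) = −2c ℓ`, so `b · V̇ = 2 ℓ (b x' − c y')`. A polynomial vanishing off the line
`ℓ = 0` vanishes identically, hence `b x' = c y'` coefficientwise, i.e. each coefficient pair of
`(x', y')` is a multiple of `(c, b)`, equivalently of `(b, a)`. The sign conditions of a kinetic
system make the multipliers of the pairs other than the `xy` one nonnegative.
-/

theorem forall_eq_zero_of_forall_linear_mul_eq_zero {f : ℝ → ℝ → ℝ} {a b : ℝ} (ha : a ≠ 0)
    (hf : ∀ y, Continuous (f · y)) (h : ∀ x y, (a * x - b * y) * f x y = 0) :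
    ∀ x y, f x y = 0 := by
  intro x y
  have hzero : (f · y) = fun _ => 0 := by
    refine (hf y).ext_on (dense_compl_singleton (b * y / a)) continuous_const fun x' hx' => ?_
    refine (mul_eq_zero.mp (h x' y)).resolve_left fun hline => hx' ?_
    rw [Set.mem_singleton_iff, eq_div_iff ha]
    linarith
  exact congrFun hzero x

theorem coeffs_eq_zero_of_forall_quadratic_eq_zero {A B C D E F : ℝ}
    (h : ∀ x y : ℝ, A * x ^ 2 + B * x * y + C * y ^ 2 + D * x + E * y + F = 0) :
    A = 0 ∧ B = 0 ∧ C = 0 ∧ D = 0 ∧ E = 0 ∧ F = 0 := by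
  have h00 := h 0 0
  have h10 := h 1 0
  have hm10 := h (-1) 0
  have h01 := h 0 1
  have h0m1 := h 0 (-1)
  have h11 := h 1 1
  norm_num at h00 h10 hm10 h01 h0m1 h11
  refine ⟨?_, ?_, ?_, ?_, ?_, h00⟩ <;> linarith

theorem exists_eq_mul_of_mul_eq_mul {u v p q : ℝ} (hv : v ≠ 0) (h : v * p = u * q) :
    ∃ t, p = u * t ∧ q = v * t :=
  ⟨q / v, by field_simp; linarith, by field_simp⟩

theorem exists_nonneg_eq_mul_of_mul_eq_mul {u v p q : ℝ} (hv : 0 < v) (hq : 0 ≤ q)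
    (h : v * p = u * q) : ∃ t, 0 ≤ t ∧ p = u * t ∧ q = v * t := by
  obtain ⟨t, rfl, rfl⟩ := exists_eq_mul_of_mul_eq_mul hv.ne' h
  exact ⟨t, (mul_nonneg_iff_of_pos_left hv).mp hq, rfl, rfl⟩

theorem mul_eq_mul_of_mul_eq_mul_of_mul_eq_sq {a b c p q : ℝ} (hb : b ≠ 0)
    (hdisc : a * c = b ^ 2) (h : b * p = c * q) : a * p = b * q :=
  mul_left_cancel₀ hb (by linear_combination a * h + q * hdisc)

theorem coeffs_proportional_of_firstIntegral {A₁ B₁ C₁ D₁ E₁ F₁ A₂ B₂ C₂ D₂ E₂ F₂ a b c : ℝ}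
    (ha : a ≠ 0) (hdisc : a * c = b ^ 2)
    (hfi : ∀ x y : ℝ,
      (2 * a * x - 2 * b * y) *
        (A₁ * x ^ 2 + B₁ * x * y + C₁ * y ^ 2 + D₁ * x + E₁ * y + F₁) +
      (-(2 * b * x) + 2 * c * y) *
        (A₂ * x ^ 2 + B₂ * x * y + C₂ * y ^ 2 + D₂ * x + E₂ * y + F₂) = 0) :
    b * A₁ = c * A₂ ∧ b * B₁ = c * B₂ ∧ b * C₁ = c * C₂ ∧
      b * D₁ = c * D₂ ∧ b * E₁ = c * E₂ ∧ b * F₁ = c * F₂ := by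
  have hline : ∀ x y, (a * x - b * y) *
      ((b * A₁ - c * A₂) * x ^ 2 + (b * B₁ - c * B₂) * x * y + (b * C₁ - c * C₂) * y ^ 2 +
        (b * D₁ - c * D₂) * x + (b * E₁ - c * E₂) * y + (b * F₁ - c * F₂)) = 0 := fun x y => by
    linear_combination (b / 2) * hfi x y -
      x * (A₂ * x ^ 2 + B₂ * x * y + C₂ * y ^ 2 + D₂ * x + E₂ * y + F₂) * hdisc
  obtain ⟨hA, hB, hC, hD, hE, hF⟩ := coeffs_eq_zero_of_forall_quadratic_eq_zero
    (forall_eq_zero_of_forall_linear_mul_eq_zero ha (fun _ => by fun_prop) hline)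
  exact ⟨sub_eq_zero.mp hA, sub_eq_zero.mp hB, sub_eq_zero.mp hC,
    sub_eq_zero.mp hD, sub_eq_zero.mp hE, sub_eq_zero.mp hF⟩

theorem stmt_8_general (A₁ B₁ C₁ D₁ E₁ F₁ A₂ B₂ C₂ D₂ E₂ F₂ a b c : ℝ)
    (hC₁ : 0 ≤ C₁) (hE₁ : 0 ≤ E₁) (hF₁ : 0 ≤ F₁)
    (hA₂ : 0 ≤ A₂) (hD₂ : 0 ≤ D₂)
    (ha : 0 < a) (hb : 0 < b) (hc : 0 < c) (hdisc : a * c = b ^ 2)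
    (hfi : ∀ x y : ℝ,
      (2 * a * x - 2 * b * y) *
        (A₁ * x ^ 2 + B₁ * x * y + C₁ * y ^ 2 + D₁ * x + E₁ * y + F₁) +
      (-(2 * b * x) + 2 * c * y) *
        (A₂ * x ^ 2 + B₂ * x * y + C₂ * y ^ 2 + D₂ * x + E₂ * y + F₂) = 0) :
    ∃ K L M N R S : ℝ, 0 ≤ K ∧ 0 ≤ L ∧ 0 ≤ M ∧ 0 ≤ N ∧ 0 ≤ R ∧
      (∀ x y : ℝ,
        A₁ * x ^ 2 + B₁ * x * y + C₁ * y ^ 2 + D₁ * x + E₁ * y + F₁ =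
          b * K * x ^ 2 + c * S * x * y + c * L * y ^ 2 + b * M * x + c * N * y + c * R) ∧
      (∀ x y : ℝ,
        A₂ * x ^ 2 + B₂ * x * y + C₂ * y ^ 2 + D₂ * x + E₂ * y + F₂ =
          a * K * x ^ 2 + b * S * x * y + b * L * y ^ 2 + a * M * x + b * N * y + b * R) := by
  obtain ⟨hA, hB, hC, hD, hE, hF⟩ := coeffs_proportional_of_firstIntegral ha.ne' hdisc hfi
  obtain ⟨K, hK, rfl, rfl⟩ := exists_nonneg_eq_mul_of_mul_eq_mul ha hA₂
    (mul_eq_mul_of_mul_eq_mul_of_mul_eq_sq hb.ne' hdisc hA)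
  obtain ⟨M, hM, rfl, rfl⟩ := exists_nonneg_eq_mul_of_mul_eq_mul ha hD₂
    (mul_eq_mul_of_mul_eq_mul_of_mul_eq_sq hb.ne' hdisc hD)
  obtain ⟨S, rfl, rfl⟩ := exists_eq_mul_of_mul_eq_mul hc.ne' hB.symm
  obtain ⟨L, hL, rfl, rfl⟩ := exists_nonneg_eq_mul_of_mul_eq_mul hc hC₁ hC.symm
  obtain ⟨N, hN, rfl, rfl⟩ := exists_nonneg_eq_mul_of_mul_eq_mul hc hE₁ hE.symm
  obtain ⟨R, hR, rfl, rfl⟩ := exists_nonneg_eq_mul_of_mul_eq_mul hc hF₁ hF.symm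
  exact ⟨K, L, M, N, R, S, hK, hL, hM, hN, hR, fun x y => by ring, fun x y => by ring⟩

/-- `V = a x² − 2b xy + c y²` with `a, b, c > 0`, `ac = b²`, as a first
integral of a kinetic planar quadratic system. -/
theorem stmt_8 (A₁ B₁ C₁ D₁ E₁ F₁ A₂ B₂ C₂ D₂ E₂ F₂ a b c : ℝ)
    (hC₁ : 0 ≤ C₁) (hE₁ : 0 ≤ E₁) (hF₁ : 0 ≤ F₁)
    (hA₂ : 0 ≤ A₂) (hD₂ : 0 ≤ D₂) (hF₂ : 0 ≤ F₂)
    (ha : 0 < a) (hb : 0 < b) (hc : 0 < c) (hdisc : a * c = b ^ 2)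
    (hfi : ∀ x y : ℝ,
      (2 * a * x - 2 * b * y) *
        (A₁ * x ^ 2 + B₁ * x * y + C₁ * y ^ 2 + D₁ * x + E₁ * y + F₁) +
      (-(2 * b * x) + 2 * c * y) *
        (A₂ * x ^ 2 + B₂ * x * y + C₂ * y ^ 2 + D₂ * x + E₂ * y + F₂) = 0) :
    ∃ K L M N R S : ℝ, 0 ≤ K ∧ 0 ≤ L ∧ 0 ≤ M ∧ 0 ≤ N ∧ 0 ≤ R ∧
      (∀ x y : ℝ,
        A₁ * x ^ 2 + B₁ * x * y + C₁ * y ^ 2 + D₁ * x + E₁ * y + F₁ =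
          b * K * x ^ 2 + c * S * x * y + c * L * y ^ 2 + b * M * x + c * N * y + c * R) ∧
      (∀ x y : ℝ,
        A₂ * x ^ 2 + B₂ * x * y + C₂ * y ^ 2 + D₂ * x + E₂ * y + F₂ =
          a * K * x ^ 2 + b * S * x * y + b * L * y ^ 2 + a * M * x + b * N * y + b * R) :=
  stmt_8_general A₁ B₁ C₁ D₁ E₁ F₁ A₂ B₂ C₂ D₂ E₂ F₂ a b c hC₁ hE₁ hF₁ hA₂ hD₂ ha hb hc hdisc hfi
end

section
/- Consider a kinetic planar quadratic system as above. If V(x,y) = a x^2 + 2b xy − c y^2 with a > 0, c > 0, b ≠ 0 is a first integral, then there exist K,L,M ≥ 0 with x' = −bK x^2 + (cK − bL)xy + cL y^2 − bM x + cM y and y' = aK x^2 + (bK + aL)xy + bL y^2 + aM x + bM y. -/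
/-!
Write `P, Q` for the right-hand sides of `x'` and `y'`, so that the hypothesis reads
`(a x + b y) P + (b x - c y) Q ≡ 0`. Since `a c + b² > 0` the two linear forms are independent,
and comparing coefficients degree by degree forces `P = -(b x - c y) S`, `Q = (a x + b y) S` for an
affine `S = K x + L y + M`. Then `a K`, `c L` and `a M` are the coefficients of `x²` in `Q`, of `y²`
in `P` and of `x` in `Q`, which are nonnegative because the system is kinetic.
-/

lemma coeffs_eq_zero_of_cubic_eq_zero {p₃ p₂ p₁ p₀ : ℝ}
    (h : ∀ x : ℝ, p₃ * x ^ 3 + p₂ * x ^ 2 + p₁ * x + p₀ = 0) :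
    p₃ = 0 ∧ p₂ = 0 ∧ p₁ = 0 ∧ p₀ = 0 := by
  have h₀ := h 0
  have h₁ := h 1
  have hm₁ := h (-1)
  have h₂ := h 2
  norm_num at h₀ h₁ hm₁ h₂
  exact ⟨by linarith, by linarith, by linarith, h₀⟩

lemma coeffs_eq_zero_of_bivariate_cubic_eq_zero
    {c₃₀ c₂₁ c₁₂ c₀₃ c₂₀ c₁₁ c₀₂ c₁₀ c₀₁ c₀₀ : ℝ}
    (h : ∀ x y : ℝ, c₃₀ * x ^ 3 + c₂₁ * x ^ 2 * y + c₁₂ * x * y ^ 2 + c₀₃ * y ^ 3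
      + c₂₀ * x ^ 2 + c₁₁ * x * y + c₀₂ * y ^ 2 + c₁₀ * x + c₀₁ * y + c₀₀ = 0) :
    c₃₀ = 0 ∧ c₂₁ = 0 ∧ c₁₂ = 0 ∧ c₀₃ = 0 ∧ c₂₀ = 0 ∧ c₁₁ = 0 ∧ c₀₂ = 0 ∧
      c₁₀ = 0 ∧ c₀₁ = 0 ∧ c₀₀ = 0 := by
  have hx (y : ℝ) := coeffs_eq_zero_of_cubic_eq_zero (p₃ := c₃₀) (p₂ := c₂₁ * y + c₂₀)
    (p₁ := c₁₂ * y ^ 2 + c₁₁ * y + c₁₀) (p₀ := c₀₃ * y ^ 3 + c₀₂ * y ^ 2 + c₀₁ * y + c₀₀)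
    fun x => by linear_combination h x y
  obtain ⟨-, -, h₂₁, h₂₀⟩ := coeffs_eq_zero_of_cubic_eq_zero (p₃ := 0) (p₂ := 0) (p₁ := c₂₁)
    (p₀ := c₂₀) fun y => by linear_combination (hx y).2.1
  obtain ⟨-, h₁₂, h₁₁, h₁₀⟩ := coeffs_eq_zero_of_cubic_eq_zero (p₃ := 0) (p₂ := c₁₂)
    (p₁ := c₁₁) (p₀ := c₁₀) fun y => by linear_combination (hx y).2.2.1
  obtain ⟨h₀₃, h₀₂, h₀₁, h₀₀⟩ := coeffs_eq_zero_of_cubic_eq_zero fun y => (hx y).2.2.2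
  exact ⟨(hx 0).1, h₂₁, h₁₂, h₀₃, h₂₀, h₁₁, h₀₂, h₁₀, h₀₁, h₀₀⟩

lemma eq_zero_of_det_ne_zero {a b c u v : ℝ} (hdet : a * c + b ^ 2 ≠ 0)
    (h₁ : a * u + b * v = 0) (h₂ : b * u - c * v = 0) : u = 0 ∧ v = 0 :=
  ⟨(mul_eq_zero.1 (by linear_combination c * h₁ + b * h₂ : (a * c + b ^ 2) * u = 0)).resolve_left
      hdet,
    (mul_eq_zero.1 (by linear_combination b * h₁ - a * h₂ : (a * c + b ^ 2) * v = 0)).resolve_left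
      hdet⟩

theorem stmt_9_general (A₁ B₁ C₁ D₁ E₁ F₁ A₂ B₂ C₂ D₂ E₂ F₂ a b c : ℝ)
    (hC₁ : 0 ≤ C₁) (hA₂ : 0 ≤ A₂) (hD₂ : 0 ≤ D₂)
    (ha : 0 < a) (hc : 0 < c)
    (hfi : ∀ x y : ℝ,
      (2 * a * x + 2 * b * y) *
        (A₁ * x ^ 2 + B₁ * x * y + C₁ * y ^ 2 + D₁ * x + E₁ * y + F₁) +
      (2 * b * x - 2 * c * y) *
        (A₂ * x ^ 2 + B₂ * x * y + C₂ * y ^ 2 + D₂ * x + E₂ * y + F₂) = 0) :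
    ∃ K L M : ℝ, 0 ≤ K ∧ 0 ≤ L ∧ 0 ≤ M ∧
      (∀ x y : ℝ,
        A₁ * x ^ 2 + B₁ * x * y + C₁ * y ^ 2 + D₁ * x + E₁ * y + F₁ =
          -b * K * x ^ 2 + (c * K - b * L) * x * y + c * L * y ^ 2 - b * M * x + c * M * y) ∧
      (∀ x y : ℝ,
        A₂ * x ^ 2 + B₂ * x * y + C₂ * y ^ 2 + D₂ * x + E₂ * y + F₂ =
          a * K * x ^ 2 + (b * K + a * L) * x * y + b * L * y ^ 2 + a * M * x + b * M * y) := by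
  have hdet : a * c + b ^ 2 ≠ 0 := by positivity
  have hcubic : ∀ x y : ℝ,
      (a * A₁ + b * A₂) * x ^ 3 + (a * B₁ + b * A₁ + b * B₂ - c * A₂) * x ^ 2 * y
      + (a * C₁ + b * B₁ + b * C₂ - c * B₂) * x * y ^ 2 + (b * C₁ - c * C₂) * y ^ 3
      + (a * D₁ + b * D₂) * x ^ 2 + (a * E₁ + b * D₁ + b * E₂ - c * D₂) * x * y
      + (b * E₁ - c * E₂) * y ^ 2 + (a * F₁ + b * F₂) * x + (b * F₁ - c * F₂) * y + 0 = 0 :=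
    fun x y => by linear_combination hfi x y / 2
  obtain ⟨e₃₀, e₂₁, e₁₂, e₀₃, e₂₀, e₁₁, e₀₂, e₁₀, e₀₁, -⟩ :=
    coeffs_eq_zero_of_bivariate_cubic_eq_zero hcubic
  obtain ⟨K, rfl⟩ : ∃ K, A₂ = a * K := ⟨A₂ / a, by field_simp⟩
  obtain ⟨L, rfl⟩ : ∃ L, C₁ = c * L := ⟨C₁ / c, by field_simp⟩
  obtain ⟨M, rfl⟩ : ∃ M, D₂ = a * M := ⟨D₂ / a, by field_simp⟩
  have hA₁ : A₁ = -b * K := mul_left_cancel₀ ha.ne' (by linear_combination e₃₀)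
  have hC₂ : C₂ = b * L := mul_left_cancel₀ hc.ne' (by linear_combination -e₀₃)
  have hD₁ : D₁ = -b * M := mul_left_cancel₀ ha.ne' (by linear_combination e₂₀)
  obtain ⟨hB₁, hB₂⟩ :=
    eq_zero_of_det_ne_zero hdet (u := B₁ - (c * K - b * L)) (v := B₂ - (b * K + a * L))
      (by linear_combination e₂₁ - b * hA₁) (by linear_combination e₁₂ - b * hC₂)
  obtain ⟨hE₁, hE₂⟩ := eq_zero_of_det_ne_zero hdet (u := E₁ - c * M) (v := E₂ - b * M)
    (by linear_combination e₁₁ - b * hD₁) (by linear_combination e₀₂)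
  obtain ⟨rfl, rfl⟩ := eq_zero_of_det_ne_zero hdet e₁₀ e₀₁
  subst hA₁ hC₂ hD₁
  refine ⟨K, L, M, (mul_nonneg_iff_of_pos_left ha).1 hA₂, (mul_nonneg_iff_of_pos_left hc).1 hC₁,
    (mul_nonneg_iff_of_pos_left ha).1 hD₂, fun x y => ?_, fun x y => ?_⟩
  · linear_combination x * y * hB₁ + y * hE₁
  · linear_combination x * y * hB₂ + y * hE₂

/-- `V = a x² + 2b xy − c y²` with `a, c > 0`, `b ≠ 0`, as a first integral of
a kinetic planar quadratic system. -/
theorem stmt_9 (A₁ B₁ C₁ D₁ E₁ F₁ A₂ B₂ C₂ D₂ E₂ F₂ a b c : ℝ)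
    (hC₁ : 0 ≤ C₁) (hE₁ : 0 ≤ E₁) (hF₁ : 0 ≤ F₁)
    (hA₂ : 0 ≤ A₂) (hD₂ : 0 ≤ D₂) (hF₂ : 0 ≤ F₂)
    (ha : 0 < a) (hc : 0 < c) (hb : b ≠ 0)
    (hfi : ∀ x y : ℝ,
      (2 * a * x + 2 * b * y) *
        (A₁ * x ^ 2 + B₁ * x * y + C₁ * y ^ 2 + D₁ * x + E₁ * y + F₁) +
      (2 * b * x - 2 * c * y) *
        (A₂ * x ^ 2 + B₂ * x * y + C₂ * y ^ 2 + D₂ * x + E₂ * y + F₂) = 0) :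
    ∃ K L M : ℝ, 0 ≤ K ∧ 0 ≤ L ∧ 0 ≤ M ∧
      (∀ x y : ℝ,
        A₁ * x ^ 2 + B₁ * x * y + C₁ * y ^ 2 + D₁ * x + E₁ * y + F₁ =
          -b * K * x ^ 2 + (c * K - b * L) * x * y + c * L * y ^ 2 - b * M * x + c * M * y) ∧
      (∀ x y : ℝ,
        A₂ * x ^ 2 + B₂ * x * y + C₂ * y ^ 2 + D₂ * x + E₂ * y + F₂ =
          a * K * x ^ 2 + (b * K + a * L) * x * y + b * L * y ^ 2 + a * M * x + b * M * y) :=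
  stmt_9_general A₁ B₁ C₁ D₁ E₁ F₁ A₂ B₂ C₂ D₂ E₂ F₂ a b c hC₁ hA₂ hD₂ ha hc hfi
end

section
/- Consider a kinetic planar quadratic system as above. If V(x,y) = a x^2 + 2b xy with a > 0 and b ≠ 0 is a first integral, then there exist K, M ≥ 0 and S ∈ ℝ with x' = −bK x^2 − bS xy − bM x and y' = aK x^2 + (bK + aS)xy + bS y^2 + aM x + bM y. -/
/-!
Expanding the first-integral identity gives a cubic polynomial in `x, y` that vanishes
identically, so each of its coefficients vanishes. The `y³`, `y²`, `y` coefficients force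
`C₁ = E₁ = F₁ = 0` (as `b ≠ 0`), and the remaining ones express `A₁, D₁, B₂, C₂, E₂, F₂`
through `A₂, D₂, B₁`; one reads off `K = A₂ / a`, `M = D₂ / a`, `S = -B₁ / b`, with `K, M ≥ 0`
because `A₂, D₂ ≥ 0` and `a > 0`.
-/

theorem cubic_coeffs_eq_zero_s10 {K : Type*} [Field K] [CharZero K] {a b c d : K}
    (h : ∀ x : K, a * x ^ 3 + b * x ^ 2 + c * x + d = 0) :
    a = 0 ∧ b = 0 ∧ c = 0 ∧ d = 0 := by
  have h₀ := h 0
  have h₁ := h 1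
  have h₂ := h 2
  have hn := h (-1)
  refine ⟨?_, ?_, ?_, ?_⟩
  · linear_combination (1 / 2 : K) * h₀ - (1 / 2 : K) * h₁ + (1 / 6 : K) * h₂ - (1 / 6 : K) * hn
  · linear_combination -h₀ + (1 / 2 : K) * h₁ + (1 / 2 : K) * hn
  · linear_combination (-1 / 2 : K) * h₀ + h₁ - (1 / 6 : K) * h₂ - (1 / 3 : K) * hn
  · linear_combination h₀

theorem bivariate_cubic_coeffs_eq_zero {K : Type*} [Field K] [CharZero K]
    {c₃₀ c₂₁ c₁₂ c₀₃ c₂₀ c₁₁ c₀₂ c₁₀ c₀₁ c₀₀ : K}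
    (h : ∀ x y : K, c₃₀ * x ^ 3 + c₂₁ * x ^ 2 * y + c₁₂ * x * y ^ 2 + c₀₃ * y ^ 3 +
      c₂₀ * x ^ 2 + c₁₁ * x * y + c₀₂ * y ^ 2 + c₁₀ * x + c₀₁ * y + c₀₀ = 0) :
    c₃₀ = 0 ∧ c₂₁ = 0 ∧ c₁₂ = 0 ∧ c₀₃ = 0 ∧ c₂₀ = 0 ∧ c₁₁ = 0 ∧ c₀₂ = 0 ∧
      c₁₀ = 0 ∧ c₀₁ = 0 ∧ c₀₀ = 0 := by
  have hy (x : K) : c₀₃ = 0 ∧ c₁₂ * x + c₀₂ = 0 ∧ c₂₁ * x ^ 2 + c₁₁ * x + c₀₁ = 0 ∧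
      c₃₀ * x ^ 3 + c₂₀ * x ^ 2 + c₁₀ * x + c₀₀ = 0 :=
    cubic_coeffs_eq_zero_s10 fun y ↦ by linear_combination h x y
  obtain ⟨-, -, h₁₂, h₀₂⟩ := cubic_coeffs_eq_zero_s10 (a := 0) (b := 0) (c := c₁₂) (d := c₀₂)
    fun x ↦ by linear_combination (hy x).2.1
  obtain ⟨-, h₂₁, h₁₁, h₀₁⟩ := cubic_coeffs_eq_zero_s10 (a := 0) (b := c₂₁) (c := c₁₁) (d := c₀₁)
    fun x ↦ by linear_combination (hy x).2.2.1
  obtain ⟨h₃₀, h₂₀, h₁₀, h₀₀⟩ := cubic_coeffs_eq_zero_s10 fun (x : K) ↦ (hy x).2.2.2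
  exact ⟨h₃₀, h₂₁, h₁₂, (hy 0).1, h₂₀, h₁₁, h₀₂, h₁₀, h₀₁, h₀₀⟩

theorem stmt_10_general (A₁ B₁ C₁ D₁ E₁ F₁ A₂ B₂ C₂ D₂ E₂ F₂ a b : ℝ)
    (hA₂ : 0 ≤ A₂) (hD₂ : 0 ≤ D₂)
    (ha : 0 < a) (hb : b ≠ 0)
    (hfi : ∀ x y : ℝ,
      (2 * a * x + 2 * b * y) *
        (A₁ * x ^ 2 + B₁ * x * y + C₁ * y ^ 2 + D₁ * x + E₁ * y + F₁) +
      (2 * b * x) *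
        (A₂ * x ^ 2 + B₂ * x * y + C₂ * y ^ 2 + D₂ * x + E₂ * y + F₂) = 0) :
    ∃ K M S : ℝ, 0 ≤ K ∧ 0 ≤ M ∧
      (∀ x y : ℝ,
        A₁ * x ^ 2 + B₁ * x * y + C₁ * y ^ 2 + D₁ * x + E₁ * y + F₁ =
          -b * K * x ^ 2 - b * S * x * y - b * M * x) ∧
      (∀ x y : ℝ,
        A₂ * x ^ 2 + B₂ * x * y + C₂ * y ^ 2 + D₂ * x + E₂ * y + F₂ =
          a * K * x ^ 2 + (b * K + a * S) * x * y + b * S * y ^ 2 + a * M * x + b * M * y) := by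
  obtain ⟨h₃₀, h₂₁, h₁₂, h₀₃, h₂₀, h₁₁, h₀₂, h₁₀, h₀₁, -⟩ :=
    bivariate_cubic_coeffs_eq_zero (c₃₀ := a * A₁ + b * A₂) (c₂₁ := b * A₁ + a * B₁ + b * B₂)
      (c₁₂ := b * B₁ + a * C₁ + b * C₂) (c₀₃ := b * C₁) (c₂₀ := a * D₁ + b * D₂)
      (c₁₁ := b * D₁ + a * E₁ + b * E₂) (c₀₂ := b * E₁) (c₁₀ := a * F₁ + b * F₂) (c₀₁ := b * F₁)
      (c₀₀ := 0) fun x y ↦ by linear_combination (1 / 2 : ℝ) * hfi x y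
  have hC₁ : C₁ = 0 := by simpa [hb] using h₀₃
  have hE₁ : E₁ = 0 := by simpa [hb] using h₀₂
  have hF₁ : F₁ = 0 := by simpa [hb] using h₀₁
  have hF₂ : F₂ = 0 := by simpa [hF₁, hb] using h₁₀
  have hA₁ : A₁ = -b * (A₂ / a) := by field_simp; linear_combination h₃₀
  have hD₁ : D₁ = -b * (D₂ / a) := by field_simp; linear_combination h₂₀
  have hC₂ : C₂ = -B₁ := mul_left_cancel₀ hb (by linear_combination h₁₂ - a * hC₁)
  have hE₂ : E₂ = -D₁ := mul_left_cancel₀ hb (by linear_combination h₁₁ - a * hE₁)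
  refine ⟨A₂ / a, D₂ / a, -B₁ / b, by positivity, by positivity, fun x y ↦ ?_, fun x y ↦ ?_⟩
  · rw [hA₁, hC₁, hD₁, hE₁, hF₁]
    field_simp
    ring
  · rw [hC₂, hE₂, hD₁, hF₂]
    field_simp
    linear_combination a * x * y * h₂₁ - b * x * y * h₃₀

/-- `V = a x² + 2b xy` with `a > 0`, `b ≠ 0`, as a first integral of a
kinetic planar quadratic system. -/
theorem stmt_10 (A₁ B₁ C₁ D₁ E₁ F₁ A₂ B₂ C₂ D₂ E₂ F₂ a b : ℝ)
    (hC₁ : 0 ≤ C₁) (hE₁ : 0 ≤ E₁) (hF₁ : 0 ≤ F₁)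
    (hA₂ : 0 ≤ A₂) (hD₂ : 0 ≤ D₂) (hF₂ : 0 ≤ F₂)
    (ha : 0 < a) (hb : b ≠ 0)
    (hfi : ∀ x y : ℝ,
      (2 * a * x + 2 * b * y) *
        (A₁ * x ^ 2 + B₁ * x * y + C₁ * y ^ 2 + D₁ * x + E₁ * y + F₁) +
      (2 * b * x) *
        (A₂ * x ^ 2 + B₂ * x * y + C₂ * y ^ 2 + D₂ * x + E₂ * y + F₂) = 0) :
    ∃ K M S : ℝ, 0 ≤ K ∧ 0 ≤ M ∧
      (∀ x y : ℝ,
        A₁ * x ^ 2 + B₁ * x * y + C₁ * y ^ 2 + D₁ * x + E₁ * y + F₁ =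
          -b * K * x ^ 2 - b * S * x * y - b * M * x) ∧
      (∀ x y : ℝ,
        A₂ * x ^ 2 + B₂ * x * y + C₂ * y ^ 2 + D₂ * x + E₂ * y + F₂ =
          a * K * x ^ 2 + (b * K + a * S) * x * y + b * S * y ^ 2 + a * M * x + b * M * y) :=
  stmt_10_general A₁ B₁ C₁ D₁ E₁ F₁ A₂ B₂ C₂ D₂ E₂ F₂ a b hA₂ hD₂ ha hb hfi
end

section
/- If the kinetic planar quadratic system x' = −bK x^2 + (cK − bL)xy + cL y^2 − bM x + cM y, y' = aK x^2 + (bK + aL)xy + bL y^2 + aM x + bM y (a,c > 0, b ≠ 0, K,L,M ≥ 0) is kinetically mass conserving (there exist ϱ_1, ϱ_2 > 0 with ϱ_1 x' + ϱ_2 y' ≡ 0), then K = L = M = 0, so x' = y' = 0. -/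
/-!
Collecting monomials, `ϱ₁ x' + ϱ₂ y' = α K x² + (β K + α L) x y + β L y² + α M x + β M y`
with `α = ϱ₂ a - ϱ₁ b` and `β = ϱ₁ c + ϱ₂ b`. All five coefficients must vanish, and `α`, `β`
cannot vanish together because `ϱ₂ α + ϱ₁ β = ϱ₂² a + ϱ₁² c > 0`. The linear system for
`K, L, M` is then nondegenerate.
-/

theorem coeffs_eq_zero_of_forall_quadratic_eq_zero_s11 {R : Type*} [Field R] [CharZero R]
    {p q r s t : R}
    (h : ∀ x y : R, p * x ^ 2 + q * x * y + r * y ^ 2 + s * x + t * y = 0) :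
    p = 0 ∧ q = 0 ∧ r = 0 ∧ s = 0 ∧ t = 0 := by
  have h₁ := h 1 0
  have h₂ := h (-1) 0
  have h₃ := h 0 1
  have h₄ := h 0 (-1)
  have h₅ := h 1 1
  refine ⟨?_, ?_, ?_, ?_, ?_⟩
  · linear_combination (h₁ + h₂) / 2
  · linear_combination h₅ - h₁ - h₃
  · linear_combination (h₃ + h₄) / 2
  · linear_combination (h₁ - h₂) / 2
  · linear_combination (h₃ - h₄) / 2

theorem eq_zero_and_eq_zero_of_mul_eq_zero_of_add_mul_eq_zero {R : Type*} [CommRing R]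
    [NoZeroDivisors R] {α β K L : R} (hαβ : α ≠ 0 ∨ β ≠ 0)
    (hK : α * K = 0) (hKL : β * K + α * L = 0) (hL : β * L = 0) :
    K = 0 ∧ L = 0 := by
  rcases hαβ with hα | hβ
  · have hK₀ : K = 0 := (mul_eq_zero.mp hK).resolve_left hα
    refine ⟨hK₀, (mul_eq_zero.mp ?_).resolve_left hα⟩
    simpa [hK₀] using hKL
  · have hL₀ : L = 0 := (mul_eq_zero.mp hL).resolve_left hβ
    refine ⟨(mul_eq_zero.mp ?_).resolve_left hβ, hL₀⟩
    simpa [hL₀] using hKL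

theorem stmt_11_general (a b c K L M ϱ₁ ϱ₂ : ℝ)
    (ha : 0 < a) (hc : 0 < c)
    (hϱ₁ : 0 < ϱ₁)
    (hmc : ∀ x y : ℝ,
      ϱ₁ * (-b * K * x ^ 2 + (c * K - b * L) * x * y + c * L * y ^ 2
              - b * M * x + c * M * y) +
      ϱ₂ * (a * K * x ^ 2 + (b * K + a * L) * x * y + b * L * y ^ 2
              + a * M * x + b * M * y) = 0) :
    K = 0 ∧ L = 0 ∧ M = 0 := by
  set α := ϱ₂ * a - ϱ₁ * b
  set β := ϱ₁ * c + ϱ₂ * b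
  have hαβ : α ≠ 0 ∨ β ≠ 0 := by
    by_contra! h
    have hcomb : ϱ₂ * α + ϱ₁ * β = ϱ₂ ^ 2 * a + ϱ₁ ^ 2 * c := by ring
    have hpos : 0 < ϱ₂ ^ 2 * a + ϱ₁ ^ 2 * c := by positivity
    rw [h.1, h.2] at hcomb
    linarith
  obtain ⟨hK, hKL, hL, hMα, hMβ⟩ :=
    coeffs_eq_zero_of_forall_quadratic_eq_zero_s11 (p := α * K) (q := β * K + α * L) (r := β * L)
      (s := α * M) (t := β * M) fun x y => by linear_combination hmc x y
  refine and_assoc.mp ⟨eq_zero_and_eq_zero_of_mul_eq_zero_of_add_mul_eq_zero hαβ hK hKL hL, ?_⟩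
  rcases hαβ with hα | hβ
  · exact (mul_eq_zero.mp hMα).resolve_left hα
  · exact (mul_eq_zero.mp hMβ).resolve_left hβ

/-- If the kinetic system of Theorem `eq2D-3` is kinetically mass conserving
then `K = L = M = 0`, so `x' = y' = 0`. -/
theorem stmt_11 (a b c K L M ϱ₁ ϱ₂ : ℝ)
    (ha : 0 < a) (hc : 0 < c) (hb : b ≠ 0)
    (hK : 0 ≤ K) (hL : 0 ≤ L) (hM : 0 ≤ M) (hϱ₁ : 0 < ϱ₁) (hϱ₂ : 0 < ϱ₂)
    (hmc : ∀ x y : ℝ,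
      ϱ₁ * (-b * K * x ^ 2 + (c * K - b * L) * x * y + c * L * y ^ 2
              - b * M * x + c * M * y) +
      ϱ₂ * (a * K * x ^ 2 + (b * K + a * L) * x * y + b * L * y ^ 2
              + a * M * x + b * M * y) = 0) :
    K = 0 ∧ L = 0 ∧ M = 0 :=
  stmt_11_general a b c K L M ϱ₁ ϱ₂ ha hc hϱ₁ hmc
end

section
/- Among all planar polynomial systems x' = a x^2 + b x y + c y^2 + d x + e y + f, y' = A x^2 + B x y + C y^2 + D x + E y + F defined on the open positive quadrant, the only ones admitting V(x,y) = x + y − ln x − ln y as a first integral are x' = b x y − b x, y' = −b x y + b y (for an arbitrary real b). -/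
/-!
Multiplying the first-integral identity by `x y` turns it into the vanishing of a polynomial of
bidegree at most `(3, 3)` on the open quadrant. A real polynomial vanishing on `(0, ∞)` has
infinitely many roots and hence is zero, so, applied once in each variable, all coefficients of
that polynomial vanish. These are linear equations in the twelve parameters, which force the
Lotka–Volterra system.
-/

open Polynomial

theorem Polynomial.eq_zero_of_forall_pos_eval_eq_zero {p : ℝ[X]} (h : ∀ x > 0, p.eval x = 0) :
    p = 0 :=
  p.eq_zero_of_infinite_isRoot ((Set.Ioi_infinite 0).mono fun x hx ↦ h x hx)

theorem eq_zero_of_forall_pos_sum_mul_pow_eq_zero {n : ℕ} (c : Fin n → ℝ)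
    (h : ∀ x > 0, ∑ i, c i * x ^ (i : ℕ) = 0) : c = 0 := by
  set p : ℝ[X] := ∑ i, C (c i) * X ^ (i : ℕ)
  have hp : p = 0 := Polynomial.eq_zero_of_forall_pos_eval_eq_zero fun x hx ↦ by
    simpa [p, eval_finsetSum] using h x hx
  funext k
  have hk := congrArg (coeff · k) hp
  simpa [p, finsetSum_coeff, coeff_C_mul_X_pow, Fin.val_inj] using hk

theorem eq_zero_of_forall_pos_sum_mul_pow_mul_pow_eq_zero {m n : ℕ} (c : Fin m → Fin n → ℝ)
    (h : ∀ x > 0, ∀ y > 0, ∑ i, ∑ j, c i j * x ^ (i : ℕ) * y ^ (j : ℕ) = 0) : c = 0 := by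
  funext i
  refine eq_zero_of_forall_pos_sum_mul_pow_eq_zero _ fun y hy ↦ ?_
  have hx := eq_zero_of_forall_pos_sum_mul_pow_eq_zero (fun i ↦ ∑ j, c i j * y ^ (j : ℕ))
    fun x hx ↦ by simpa [Finset.sum_mul, mul_right_comm] using h x hx y hy
  exact congrFun hx i

/-- Among planar quadratic polynomial systems on the open positive quadrant,
the only ones with `V(x,y) = x + y − ln x − ln y` as a first integral are the
Lotka–Volterra equations `x' = b x y − b x`, `y' = −b x y + b y`. -/
theorem stmt_14 (a b c d e f A B C D E F : ℝ) :
    (∀ x y : ℝ, 0 < x → 0 < y →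
      (1 - 1 / x) * (a * x ^ 2 + b * x * y + c * y ^ 2 + d * x + e * y + f) +
      (1 - 1 / y) * (A * x ^ 2 + B * x * y + C * y ^ 2 + D * x + E * y + F) = 0)
    ↔
    (a = 0 ∧ c = 0 ∧ d = -b ∧ e = 0 ∧ f = 0 ∧
     A = 0 ∧ B = -b ∧ C = 0 ∧ D = 0 ∧ E = b ∧ F = 0) := by
  constructor
  · intro h
    -- coefficient of `x ^ i * y ^ j` in `x y` times the left-hand side
    let coeffs : Fin 4 → Fin 4 → ℝ :=
      ![![0, -f, -e, -c],
        ![-F, f - d + F - E, e - b + E - C, c + C],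
        ![-D, d - a + D - B, b + B, 0],
        ![-A, a + A, 0, 0]]
    have hcoeffs := eq_zero_of_forall_pos_sum_mul_pow_mul_pow_eq_zero coeffs fun x hx y hy ↦ by
      have hcleared := h x y hx hy
      field_simp at hcleared
      simp only [coeffs, Fin.sum_univ_four, Matrix.cons_val', Matrix.cons_val_fin_one,
        Matrix.cons_val_zero, Matrix.cons_val_one, Matrix.cons_val, Fin.isValue,
        Fin.coe_ofNat_eq_mod, Nat.reduceMod, Nat.zero_mod, Nat.one_mod]
      linear_combination hcleared
    simp only [coeffs, funext_iff, Pi.zero_apply, Fin.forall_fin_succ, Matrix.cons_val',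
      Matrix.cons_val_fin_one, Matrix.cons_val_zero, Matrix.cons_val_succ, Fin.isValue,
      neg_eq_zero, forall_const, true_and, and_true, and_self] at hcoeffs
    obtain ⟨⟨rfl, rfl, rfl⟩, ⟨rfl, hxy, hxy2, hC⟩, ⟨rfl, hx2y, hB⟩, rfl, ha⟩ := hcoeffs
    refine ⟨?_, rfl, ?_, rfl, rfl, rfl, ?_, ?_, rfl, ?_, rfl⟩ <;> linarith
  · rintro ⟨rfl, rfl, rfl, rfl, rfl, rfl, rfl, rfl, rfl, rfl, rfl⟩ x y hx hy
    field_simp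
    ring
end

section
/- In the setting of the previous theorem with L = 0 (no y-variables): if a quadratic kinetic, kinetically mass conserving system x_k' = X_k, z' = Z on ℝ^{K+1} has V = Σ_k a_k x_k^2 (all a_k > 0) as a first integral, then X_k = 0 for all k and Z = 0. -/
/-!
Give every `x`-variable the weight `2 a_k` and `z` the weight `0`, so that the first integral
reads `∑ w_i x_i X_i ≡ 0` with `w ≥ 0`. Mass conservation at `x = 0` forces all constant terms
to vanish. For `w_k > 0`, the first integral on the `k`-th axis kills `Q_kkk` and `R_kk`;
mass conservation on that axis then kills every `Q_ikk` (they are nonnegative by kineticity),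
and the `t²`-coefficient of the first integral on the line `t e_k + e_l` kills `Q_kkl + Q_klk`.
All remaining coefficients of `X_k` are nonnegative by kineticity, so `X_k ≥ 0` on the orthant.
At `(1, …, 1)` the first integral is then a sum of nonnegative terms `w_k X_k(1, …, 1)`, each of
which vanishes, and `X_k(1, …, 1) = 0` forces every coefficient of `X_k` to vanish.
Finally `Z = 0` by mass conservation.
-/

/-- Embedding of an `x`-index into the combined index set of `x_1,…,x_K, z`. -/
def ixIdx' (K : ℕ) (k : Fin K) : Fin (K + 1) := ⟨k.1, by have := k.2; omega⟩

/-- The index of the variable `z`. -/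
def izIdx' (K : ℕ) : Fin (K + 1) := ⟨K, by omega⟩

open Finset

variable {ι : Type*} [Fintype ι]

def quadField (Q : ι → ι → ι → ℝ) (R : ι → ι → ℝ) (c : ι → ℝ) (i : ι) (x : ι → ℝ) : ℝ :=
  (∑ j, ∑ l, Q i j l * x j * x l) + (∑ j, R i j * x j) + c i

structure IsKinetic (Q : ι → ι → ι → ℝ) (R : ι → ι → ℝ) (c : ι → ℝ) : Prop where
  quad_diag_nonneg : ∀ i j, j ≠ i → 0 ≤ Q i j j
  quad_offDiag_nonneg : ∀ i j l, j ≠ i → l ≠ i → j ≠ l → 0 ≤ Q i j l + Q i l j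
  linear_nonneg : ∀ i j, j ≠ i → 0 ≤ R i j
  const_nonneg : ∀ i, 0 ≤ c i

theorem two_mul_sum_sum (A : ι → ι → ℝ) (x : ι → ℝ) :
    2 * ∑ j, ∑ l, A j l * x j * x l = ∑ j, ∑ l, (A j l + A l j) * x j * x l := by
  have hswap : ∑ j, ∑ l, A j l * x j * x l = ∑ j, ∑ l, A l j * x j * x l := by
    rw [sum_comm]; simp only [mul_right_comm]
  rw [two_mul]
  nth_rewrite 2 [hswap]
  simp only [← sum_add_distrib, add_mul]

variable {Q : ι → ι → ι → ℝ} {R : ι → ι → ℝ} {c : ι → ℝ}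

theorem two_mul_quadField (i : ι) (x : ι → ℝ) :
    2 * quadField Q R c i x =
      (∑ j, ∑ l, (Q i j l + Q i l j) * x j * x l) + ∑ j, 2 * R i j * x j + 2 * c i := by
  rw [quadField, mul_add, mul_add, two_mul_sum_sum, mul_sum]
  simp only [mul_assoc]

theorem quadField_zero (i : ι) : quadField Q R c i 0 = c i := by
  simp [quadField]

theorem quadField_nonneg {k : ι} (hQ : ∀ j l, 0 ≤ Q k j l + Q k l j) (hR : ∀ j, 0 ≤ R k j)
    (hc : 0 ≤ c k) {x : ι → ℝ} (hx : 0 ≤ x) : 0 ≤ quadField Q R c k x := by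
  have h2 : 0 ≤ 2 * quadField Q R c k x := by
    rw [two_mul_quadField]
    refine add_nonneg (add_nonneg ?_ ?_) (by linarith)
    · exact sum_nonneg fun j _ => sum_nonneg fun l _ =>
        mul_nonneg (mul_nonneg (hQ j l) (hx j)) (hx l)
    · exact sum_nonneg fun j _ => mul_nonneg (by linarith [hR j]) (hx j)
  linarith

theorem quadField_eq_zero_of_eval_one {k : ι} (hQ : ∀ j l, 0 ≤ Q k j l + Q k l j)
    (hR : ∀ j, 0 ≤ R k j) (hc : 0 ≤ c k) (h1 : quadField Q R c k 1 = 0) (x : ι → ℝ) :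
    quadField Q R c k x = 0 := by
  have h2 := two_mul_quadField (Q := Q) (R := R) (c := c) k 1
  simp only [Pi.one_apply, mul_one, h1, mul_zero] at h2
  have hQsum : 0 ≤ ∑ j, ∑ l, (Q k j l + Q k l j) :=
    sum_nonneg fun j _ => sum_nonneg fun l _ => hQ j l
  have hRsum : 0 ≤ ∑ j, 2 * R k j := sum_nonneg fun j _ => by linarith [hR j]
  have hQ0 : ∀ j l, Q k j l + Q k l j = 0 := by
    intro j l
    have hrow := (sum_eq_zero_iff_of_nonneg fun j _ => sum_nonneg fun l _ => hQ j l).1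
      (by linarith) j (mem_univ j)
    exact (sum_eq_zero_iff_of_nonneg fun l _ => hQ j l).1 hrow l (mem_univ l)
  have hR0 : ∀ j, R k j = 0 := fun j => by
    have := (sum_eq_zero_iff_of_nonneg (f := fun j => 2 * R k j) fun j _ => by linarith [hR j]).1
      (by linarith) j (mem_univ j)
    linarith
  have hc0 : c k = 0 := by linarith
  have h2x := two_mul_quadField (Q := Q) (R := R) (c := c) k x
  simp only [hQ0, hR0, hc0, zero_mul, mul_zero, sum_const_zero, add_zero] at h2x
  linarith

theorem IsKinetic.const_eq_zero (h : IsKinetic Q R c) {ϱ : ι → ℝ} (hϱ : ∀ i, 0 < ϱ i)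
    (hmc : ∀ x, ∑ i, ϱ i * quadField Q R c i x = 0) : c = 0 := by
  have h0 := hmc 0
  simp only [quadField_zero] at h0
  funext i
  have := (sum_eq_zero_iff_of_nonneg fun i _ => mul_nonneg (hϱ i).le (h.const_nonneg i)).1 h0 i
    (mem_univ i)
  exact (mul_eq_zero.1 this).resolve_left (hϱ i).ne'

variable [DecidableEq ι]

theorem quadField_single (i k : ι) (t : ℝ) :
    quadField Q R c i (Pi.single k t) = Q i k k * t ^ 2 + R i k * t + c i := by
  simp only [quadField, Pi.single_apply, mul_ite, mul_zero, ite_mul, zero_mul, sum_ite_eq',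
    mem_univ, ↓reduceIte, add_left_inj]
  ring

theorem quadField_single_add_single (i k l : ι) (t s : ℝ) :
    quadField Q R c i (Pi.single k t + Pi.single l s) =
      Q i k k * t ^ 2 + (Q i k l + Q i l k) * t * s + Q i l l * s ^ 2
        + R i k * t + R i l * s + c i := by
  simp only [quadField, Pi.add_apply, Pi.single_apply, mul_add, mul_ite, mul_zero, add_mul,
    ite_mul, zero_mul, sum_add_distrib, sum_ite_eq', mem_univ, ↓reduceIte, add_left_inj]
  ring

theorem sum_mul_single_mul (w f : ι → ℝ) (k : ι) (t : ℝ) :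
    ∑ i, w i * (Pi.single k t : ι → ℝ) i * f i = w k * t * f k := by
  simp [Pi.single_apply, mul_ite, ite_mul]

theorem sum_mul_single_add_single_mul (w f : ι → ℝ) (k l : ι) (t s : ℝ) :
    ∑ i, w i * (Pi.single k t + Pi.single l s : ι → ℝ) i * f i = w k * t * f k + w l * s * f l := by
  simp [Pi.single_apply, mul_ite, ite_mul, mul_add, add_mul, sum_add_distrib]

section FirstIntegral

variable {w : ι → ℝ} (hfi : ∀ x, ∑ i, w i * x i * quadField Q R c i x = 0)
include hfi

theorem self_coeffs_eq_zero_of_weight_ne_zero {k : ι} (hk : w k ≠ 0) (hck : c k = 0) :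
    Q k k k = 0 ∧ R k k = 0 := by
  have h₁ := hfi (Pi.single k 1)
  have h₂ := hfi (Pi.single k (-1))
  simp only [sum_mul_single_mul, quadField_single, hck] at h₁ h₂
  have hQ : w k * Q k k k = 0 := by linear_combination (h₁ - h₂) / 2
  have hR : w k * R k k = 0 := by linear_combination (h₁ + h₂) / 2
  exact ⟨(mul_eq_zero.1 hQ).resolve_left hk, (mul_eq_zero.1 hR).resolve_left hk⟩

theorem mixed_self_coeff_eq_zero {k l : ι} (hk : w k ≠ 0) (hRkk : R k k = 0)
    (hQlkk : Q l k k = 0) : Q k k l + Q k l k = 0 := by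
  have h t := hfi (Pi.single k t + Pi.single l 1)
  simp only [sum_mul_single_add_single_mul, quadField_single_add_single, hRkk, hQlkk] at h
  have hS : w k * (Q k k l + Q k l k) = 0 := by
    linear_combination (h 1 + h (-1) - 2 * h 0) / 2
  exact (mul_eq_zero.1 hS).resolve_left hk

end FirstIntegral

namespace IsKinetic

variable {ϱ : ι → ℝ} (h : IsKinetic Q R c) (hϱ : ∀ i, 0 < ϱ i)
  (hmc : ∀ x, ∑ i, ϱ i * quadField Q R c i x = 0)
include h hϱ hmc

theorem quad_diag_eq_zero {k : ι} (hc : c = 0) (hkkk : Q k k k = 0) (i : ι) : Q i k k = 0 := by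
  have h₁ := hmc (Pi.single k 1)
  have h₂ := hmc (Pi.single k (-1))
  simp only [quadField_single, hc, Pi.zero_apply, add_zero] at h₁ h₂
  have hsum : ∑ i, ϱ i * Q i k k = 0 := calc
    ∑ i, ϱ i * Q i k k
        = (∑ i, ϱ i * (Q i k k * 1 ^ 2 + R i k * 1)
            + ∑ i, ϱ i * (Q i k k * (-1) ^ 2 + R i k * (-1))) / 2 := by
      rw [← sum_add_distrib, sum_div]
      exact sum_congr rfl fun i _ => by ring
    _ = 0 := by rw [h₁, h₂]; norm_num
  have hnn : ∀ i ∈ univ, 0 ≤ ϱ i * Q i k k := fun i _ => by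
    rcases eq_or_ne i k with rfl | hik
    · simp [hkkk]
    · exact mul_nonneg (hϱ i).le (h.quad_diag_nonneg i k hik.symm)
  exact (mul_eq_zero.1 ((sum_eq_zero_iff_of_nonneg hnn).1 hsum i (mem_univ i))).resolve_left
    (hϱ i).ne'

variable {w : ι → ℝ} (hfi : ∀ x, ∑ i, w i * x i * quadField Q R c i x = 0)
include hfi

theorem coeffs_nonneg_of_weight_ne_zero {k : ι} (hk : w k ≠ 0) :
    (∀ j l, 0 ≤ Q k j l + Q k l j) ∧ ∀ j, 0 ≤ R k j := by
  have hc := h.const_eq_zero hϱ hmc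
  obtain ⟨hkkk, hRkk⟩ := self_coeffs_eq_zero_of_weight_ne_zero hfi hk (congrFun hc k)
  have hdiag := h.quad_diag_eq_zero hϱ hmc hc hkkk
  have hmixed l : Q k k l + Q k l k = 0 := mixed_self_coeff_eq_zero hfi hk hRkk (hdiag l)
  refine ⟨fun j l => ?_, fun j => ?_⟩
  · rcases eq_or_ne j k with rfl | hjk
    · exact (hmixed l).ge
    rcases eq_or_ne l k with rfl | hlk
    · rw [add_comm]; exact (hmixed j).ge
    rcases eq_or_ne j l with rfl | hjl
    · linarith [h.quad_diag_nonneg k j hjk]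
    · exact h.quad_offDiag_nonneg k j l hjk hlk hjl
  · rcases eq_or_ne j k with rfl | hjk
    · exact hRkk.ge
    · exact h.linear_nonneg k j hjk

theorem quadField_eq_zero_of_weight_pos (hw : 0 ≤ w) {k : ι} (hk : 0 < w k) (x : ι → ℝ) :
    quadField Q R c k x = 0 := by
  have hrow i (hi : w i ≠ 0) := h.coeffs_nonneg_of_weight_ne_zero hϱ hmc hfi hi
  have hnn : ∀ i ∈ univ, 0 ≤ w i * quadField Q R c i 1 := fun i _ => by
    rcases eq_or_ne (w i) 0 with hi | hi
    · simp [hi]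
    · exact mul_nonneg (hw i)
        (quadField_nonneg (hrow i hi).1 (hrow i hi).2 (h.const_nonneg i) zero_le_one)
  have hsum := hfi 1
  simp only [Pi.one_apply, mul_one] at hsum
  have hk1 := (mul_eq_zero.1 ((sum_eq_zero_iff_of_nonneg hnn).1 hsum k (mem_univ k))).resolve_left
    hk.ne'
  exact quadField_eq_zero_of_eval_one (hrow k hk.ne').1 (hrow k hk.ne').2 (h.const_nonneg k) hk1 x

end IsKinetic

theorem ixIdx'_eq_castSucc (K : ℕ) (k : Fin K) : ixIdx' K k = k.castSucc := rfl

open Finset in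
theorem stmt_17_general (K : ℕ)
    (Q : Fin (K + 1) → Fin (K + 1) → Fin (K + 1) → ℝ)
    (R : Fin (K + 1) → Fin (K + 1) → ℝ)
    (c : Fin (K + 1) → ℝ)
    (P : Fin (K + 1) → (Fin (K + 1) → ℝ) → ℝ)
    -- P is a quadratic polynomial system:
    (hP : ∀ i x, P i x =
      (∑ j, ∑ k, Q i j k * x j * x k) + (∑ j, R i j * x j) + c i)
    -- the system is kinetic:
    (hQ1 : ∀ i j, j ≠ i → 0 ≤ Q i j j)
    (hQ2 : ∀ i j k, j ≠ i → k ≠ i → j ≠ k → 0 ≤ Q i j k + Q i k j)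
    (hR : ∀ i j, j ≠ i → 0 ≤ R i j)
    (hc : ∀ i, 0 ≤ c i)
    -- kinetically mass conserving with positive weights:
    (ϱ : Fin (K + 1) → ℝ) (hϱ : ∀ i, 0 < ϱ i)
    (hmc : ∀ x : Fin (K + 1) → ℝ, ∑ i, ϱ i * P i x = 0)
    -- V = Σ a_k x_k² is a first integral:
    (a : Fin K → ℝ) (hapos : ∀ k, 0 < a k)
    (hfi : ∀ x : Fin (K + 1) → ℝ,
      ∑ k, 2 * a k * x (ixIdx' K k) * P (ixIdx' K k) x = 0) :
    ∀ i x, P i x = 0 := by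
  obtain rfl : P = quadField Q R c := funext fun i => funext (hP i)
  have hkin : IsKinetic Q R c := ⟨hQ1, hQ2, hR, hc⟩
  set w : Fin (K + 1) → ℝ := Fin.snoc (fun k => 2 * a k) 0
  have hw : 0 ≤ w := fun i => Fin.lastCases (by simp [w]) (fun k => by simp [w, (hapos k).le]) i
  have hfi' (x : Fin (K + 1) → ℝ) : ∑ i, w i * x i * quadField Q R c i x = 0 := by
    rw [Fin.sum_univ_castSucc]
    simpa [w, ixIdx'_eq_castSucc] using hfi x
  have hX (k : Fin K) : quadField Q R c k.castSucc = 0 :=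
    funext (hkin.quadField_eq_zero_of_weight_pos hϱ hmc hfi' hw (by simp [w, hapos k]))
  have hZ (x : Fin (K + 1) → ℝ) : quadField Q R c (Fin.last K) x = 0 := by
    have h := hmc x
    simp only [Fin.sum_univ_castSucc, hX, Pi.zero_apply, mul_zero, sum_const_zero, zero_add] at h
    exact (mul_eq_zero.1 h).resolve_left (hϱ _).ne'
  exact fun i => Fin.lastCases hZ (fun k => congrFun (hX k)) i

open Finset in
/-- The case `L = 0`: a kinetic, kinetically mass conserving quadratic system
`x_k' = X_k, z' = Z` on `ℝ^(K+1)` with first integral `V = Σ a_k x_k²`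
(all `a_k > 0`) satisfies `X_k = 0` for all `k` and `Z = 0`. -/
theorem stmt_17 (K : ℕ) (hK : 1 ≤ K)
    (Q : Fin (K + 1) → Fin (K + 1) → Fin (K + 1) → ℝ)
    (R : Fin (K + 1) → Fin (K + 1) → ℝ)
    (c : Fin (K + 1) → ℝ)
    (P : Fin (K + 1) → (Fin (K + 1) → ℝ) → ℝ)
    -- P is a quadratic polynomial system:
    (hP : ∀ i x, P i x =
      (∑ j, ∑ k, Q i j k * x j * x k) + (∑ j, R i j * x j) + c i)
    -- the system is kinetic:
    (hQ1 : ∀ i j, j ≠ i → 0 ≤ Q i j j)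
    (hQ2 : ∀ i j k, j ≠ i → k ≠ i → j ≠ k → 0 ≤ Q i j k + Q i k j)
    (hR : ∀ i j, j ≠ i → 0 ≤ R i j)
    (hc : ∀ i, 0 ≤ c i)
    -- kinetically mass conserving with positive weights:
    (ϱ : Fin (K + 1) → ℝ) (hϱ : ∀ i, 0 < ϱ i)
    (hmc : ∀ x : Fin (K + 1) → ℝ, ∑ i, ϱ i * P i x = 0)
    -- V = Σ a_k x_k² is a first integral:
    (a : Fin K → ℝ) (hapos : ∀ k, 0 < a k)
    (hfi : ∀ x : Fin (K + 1) → ℝ,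
      ∑ k, 2 * a k * x (ixIdx' K k) * P (ixIdx' K k) x = 0) :
    ∀ i x, P i x = 0 :=
  stmt_17_general K Q R c P hP hQ1 hQ2 hR hc ϱ hϱ hmc a hapos hfi
end
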